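/- arXiv:1310.1583 — 7 statements merged into one kernel-verified Lean document; each statement's English description precedes it below -/
import Mathlib

section
/- Let X_∞, X_1, X_2, ... be non-negative integer-valued random variables with Pr(X_∞ = k) > 0 for all k ≥ 0. If the family {X_1, X_2, ...} is tight and for every k ≥ 1 the ratio Pr(X_n = k)/Pr(X_n = k−1) converges to Pr(X_∞ = k)/Pr(X_∞ = k−1) as n → ∞, then X_n converges in distribution to X_∞. -/
/-!
Once the probabilities are eventually positive, the ratio hypothesis telescopes to
`p n k / p n 0 → q k / q 0`, so everything hinges on `p n 0 → q 0`. Along any subsequence on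
which `p n 0` converges to some `c`, every `p n k` converges to `c * q k / q 0`, and tightness
prevents mass from escaping to infinity, so these limits sum to `1`; hence `c = q 0`. As
`p n 0 ∈ [0, 1]`, compactness turns this into convergence of the whole sequence.
-/

open Filter Topology Finset

theorem sum_range_succ_add_tsum_gt {α : Type*} [UniformSpace α] [AddCommGroup α]
    [IsUniformAddGroup α] [CompleteSpace α] [T2Space α] {f : ℕ → α} (hf : Summable f)
    (M : ℕ) : ∑ k ∈ range (M + 1), f k + ∑' k : {k : ℕ // M < k}, f k = ∑' k, f k := by
  have hcompl : ∀ k, k ∉ range (M + 1) ↔ M < k := fun k => by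
    rw [mem_range]
    omega
  rw [← hf.sum_add_tsum_subtype_compl (range (M + 1)),
    ← (Equiv.subtypeEquivRight hcompl).tsum_eq]
  rfl

theorem hasSum_one_of_tight {ι : Type*} {l : Filter ι} [l.NeBot] {p : ι → ℕ → ℝ}
    {f : ℕ → ℝ} (hp0 : ∀ n k, 0 ≤ p n k) (hp : ∀ n, HasSum (p n) 1)
    (tight : ∀ ε : ℝ, 0 < ε → ∃ M : ℕ, ∀ᶠ n in l, ∑' k : {k : ℕ // M < k}, p n k ≤ ε)
    (hf : ∀ k, Tendsto (fun n => p n k) l (𝓝 (f k))) : HasSum f 1 := by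
  have hf0 : ∀ k, 0 ≤ f k := fun k => ge_of_tendsto' (hf k) fun n => hp0 n k
  have hpartial : ∀ s : Finset ℕ, Tendsto (fun n => ∑ k ∈ s, p n k) l (𝓝 (∑ k ∈ s, f k)) :=
    fun s => tendsto_finsetSum s fun k _ => hf k
  have hle : ∀ s : Finset ℕ, ∑ k ∈ s, f k ≤ 1 := fun s =>
    le_of_tendsto' (hpartial s) fun n => sum_le_hasSum s (fun k _ => hp0 n k) (hp n)
  have hsumm : Summable f := summable_of_sum_le hf0 hle
  have hge : ∀ ε > 0, 1 - ε ≤ ∑' k, f k := by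
    intro ε hε
    obtain ⟨M, hM⟩ := tight ε hε
    have hmass : ∀ᶠ n in l, 1 - ε ≤ ∑ k ∈ range (M + 1), p n k := hM.mono fun n hn => by
      have := sum_range_succ_add_tsum_gt (hp n).summable M
      rw [(hp n).tsum_eq] at this
      linarith
    calc 1 - ε ≤ ∑ k ∈ range (M + 1), f k := ge_of_tendsto (hpartial _) hmass
      _ ≤ ∑' k, f k := hsumm.sum_le_tsum _ fun k _ => hf0 k
  rw [← le_antisymm (Real.tsum_le_of_sum_le hf0 hle) (le_of_forall_sub_le hge)]
  exact hsumm.hasSum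

theorem eventually_ne_zero_of_tendsto_div {ι G₀ : Type*} [GroupWithZero G₀] [TopologicalSpace G₀]
    [T1Space G₀] {l : Filter ι} {a b : ι → G₀} {c : G₀}
    (h : Tendsto (fun n => a n / b n) l (𝓝 c)) (hc : c ≠ 0) : ∀ᶠ n in l, b n ≠ 0 :=
  (h.eventually_ne hc).mono fun n hn hb => hn (by rw [hb, div_zero])

theorem tendsto_of_tendsto_div {ι G₀ : Type*} [GroupWithZero G₀] [TopologicalSpace G₀]
    [ContinuousMul G₀] {l : Filter ι} {a b : ι → G₀} {x y : G₀}
    (hab : Tendsto (fun n => a n / b n) l (𝓝 x)) (hb : Tendsto b l (𝓝 y))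
    (hb0 : ∀ᶠ n in l, b n ≠ 0) : Tendsto a l (𝓝 (x * y)) :=
  (hab.mul hb).congr' (hb0.mono fun _ hn => div_mul_cancel₀ _ hn)

theorem tendsto_div_apply_zero_of_tendsto_succ_div {ι G₀ : Type*} [GroupWithZero G₀]
    [TopologicalSpace G₀] [ContinuousMul G₀] {l : Filter ι} {a : ι → ℕ → G₀} {b : ℕ → G₀}
    (hb : ∀ k, b k ≠ 0) (ha : ∀ k, ∀ᶠ n in l, a n k ≠ 0)
    (hr : ∀ k, Tendsto (fun n => a n (k + 1) / a n k) l (𝓝 (b (k + 1) / b k))) (k : ℕ) :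
    Tendsto (fun n => a n k / a n 0) l (𝓝 (b k / b 0)) := by
  induction k with
  | zero =>
    rw [div_self (hb 0)]
    exact tendsto_const_nhds.congr' ((ha 0).mono fun n hn => (div_self hn).symm)
  | succ k ih =>
    rw [← div_mul_div_cancel₀ (hb k)]
    exact ((hr k).mul ih).congr' ((ha k).mono fun n hn => div_mul_div_cancel₀ hn)

theorem tendsto_of_forall_subseq_tendsto_imp_eq {X : Type*} [PseudoMetricSpace X] [ProperSpace X]
    {s : Set X} (hs : Bornology.IsBounded s) {x : ℕ → X} (hx : ∀ n, x n ∈ s) {c : X}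
    (h : ∀ φ : ℕ → ℕ, Tendsto φ atTop atTop → ∀ a, Tendsto (x ∘ φ) atTop (𝓝 a) → a = c) :
    Tendsto x atTop (𝓝 c) := by
  refine tendsto_of_subseq_tendsto fun ns hns => ?_
  obtain ⟨a, -, φ, hφ, hlim⟩ := tendsto_subseq_of_bounded hs fun n => hx (ns n)
  obtain rfl := h (ns ∘ φ) (hns.comp hφ.tendsto_atTop) a hlim
  exact ⟨φ, hlim⟩

/-- Let `X_∞, X_1, X_2, …` be non-negative integer-valued random
variables (given by their probability mass functions `p n` and `q`) with
`Pr(X_∞ = k) > 0` for all `k`. If the family `{X_n}` is tight and for every `k ≥ 1` the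
ratio `Pr(X_n = k)/Pr(X_n = k−1)` converges to `Pr(X_∞ = k)/Pr(X_∞ = k−1)`, then `X_n`
converges in distribution to `X_∞`, i.e. `Pr(X_n = k) → Pr(X_∞ = k)` for every `k`. -/
theorem stmt3 (p : ℕ → ℕ → ℝ) (q : ℕ → ℝ)
    (hp0 : ∀ n k, 0 ≤ p n k) (hps : ∀ n, Summable (p n)) (hp1 : ∀ n, ∑' k, p n k = 1)
    (hq0 : ∀ k, 0 < q k) (hqs : Summable q) (hq1 : ∑' k, q k = 1)
    (tight : ∀ ε : ℝ, 0 < ε → ∃ M : ℕ, ∀ n, ∑' k : {k : ℕ // M < k}, p n (k : ℕ) ≤ ε)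
    (hratio : ∀ k : ℕ, 1 ≤ k →
      Tendsto (fun n => p n k / p n (k - 1)) atTop (nhds (q k / q (k - 1)))) :
    ∀ k : ℕ, Tendsto (fun n => p n k) atTop (nhds (q k)) := by
  have hp : ∀ n, HasSum (p n) 1 := fun n => hp1 n ▸ (hps n).hasSum
  have hq : HasSum q 1 := hq1 ▸ hqs.hasSum
  have hsucc : ∀ k, Tendsto (fun n => p n (k + 1) / p n k) atTop (𝓝 (q (k + 1) / q k)) :=
    fun k => by simpa using hratio (k + 1) (by omega)
  have hpos : ∀ k, ∀ᶠ n in atTop, p n k ≠ 0 := fun k =>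
    eventually_ne_zero_of_tendsto_div (hsucc k) (div_pos (hq0 _) (hq0 _)).ne'
  have hdiv := tendsto_div_apply_zero_of_tendsto_succ_div (fun k => (hq0 k).ne') hpos hsucc
  have hlim0 : Tendsto (fun n => p n 0) atTop (𝓝 (q 0)) := by
    refine tendsto_of_forall_subseq_tendsto_imp_eq (Metric.isBounded_Icc (0 : ℝ) 1)
      (fun n => ⟨hp0 n 0, le_hasSum (hp n) 0 fun k _ => hp0 n k⟩) fun φ hφ c hc => ?_
    have hlimit : HasSum (fun k => q k / q 0 * c) 1 :=
      hasSum_one_of_tight (fun j => hp0 (φ j)) (fun j => hp (φ j))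
        (fun ε hε => (tight ε hε).imp fun _ hM => Eventually.of_forall fun j => hM (φ j))
        fun k => tendsto_of_tendsto_div ((hdiv k).comp hφ) hc (hφ.eventually (hpos 0))
    have h := hlimit.unique ((hq.div_const (q 0)).mul_right c)
    field_simp [(hq0 0).ne'] at h
    linarith
  intro k
  simpa [div_mul_cancel₀ _ (hq0 0).ne'] using tendsto_of_tendsto_div (hdiv k) hlim0 (hpos 0)
end

section
/- For every integer d ≥ 1, the polynomial q(μ) = μ^{2d−1}(μ²−2) − 1 has exactly one positive real root μ₀; moreover μ₀ > √2, and every other complex root of q has modulus less than √2. -/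
/-!
On `[√2, ∞)` the map `x ↦ xⁿ (x² - 2)` increases strictly from `0`, and it is `≤ 0` on `[0, √2]`;
this gives the unique positive root `μ₀ > √2`. If `z` is a complex root with `‖z‖ ≥ √2`, then
`‖z² - 2‖ = ‖z‖⁻ⁿ ≤ 1` forces `|Re z| ≥ 1`. Taking imaginary parts in
`‖z‖²ⁿ (z² - 2) = conj (zⁿ)` and using `|Im zⁿ| ≤ n |Im z| ‖z‖ⁿ⁻¹` gives
`2 |Re z| ‖z‖ⁿ⁺¹ |Im z| ≤ n |Im z|`, and `n < 2 √2ⁿ⁺¹`, so `z` is real. A real root `x` with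
`|x| ≥ √2` is positive because `n = 2d - 1` is odd, hence `x = μ₀`.
-/

open Real

theorem Nat.sq_lt_two_pow_add_three (n : ℕ) : n ^ 2 < 2 ^ (n + 3) := by
  induction n with
  | zero => norm_num
  | succ n ih =>
    have := n.lt_two_pow_self
    rw [pow_succ 2 (n + 3), pow_add 2 n 3]
    rw [pow_add 2 n 3] at ih
    nlinarith

theorem natCast_lt_two_mul_pow_succ {r : ℝ} (hr : √2 ≤ r) (n : ℕ) : (n : ℝ) < 2 * r ^ (n + 1) := by
  have hr0 : 0 ≤ r := (sqrt_nonneg 2).trans hr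
  have hr2 : 2 ≤ r ^ 2 := by simpa using pow_le_pow_left₀ (sqrt_nonneg 2) hr 2
  refine lt_of_pow_lt_pow_left₀ 2 (by positivity) ?_
  calc (n : ℝ) ^ 2 < 2 ^ (n + 3) := by exact_mod_cast n.sq_lt_two_pow_add_three
    _ = 4 * 2 ^ (n + 1) := by ring
    _ ≤ 4 * (r ^ 2) ^ (n + 1) := by gcongr
    _ = (2 * r ^ (n + 1)) ^ 2 := by ring

theorem Complex.abs_im_pow_mul_norm_le (z : ℂ) (n : ℕ) :
    |(z ^ n).im| * ‖z‖ ≤ n * |z.im| * ‖z‖ ^ n := by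
  induction n with
  | zero => simp
  | succ n ih =>
    have hre : |(z ^ n).re| ≤ ‖z‖ ^ n := by simpa using abs_re_le_norm (z ^ n)
    calc |(z ^ (n + 1)).im| * ‖z‖
        ≤ (|(z ^ n).re| * |z.im| + |(z ^ n).im| * |z.re|) * ‖z‖ := by
          rw [pow_succ, mul_im, ← abs_mul, ← abs_mul]
          gcongr
          exact abs_add_le _ _
      _ ≤ (‖z‖ ^ n * |z.im|) * ‖z‖ + |(z ^ n).im| * ‖z‖ * ‖z‖ := by
          rw [add_mul, mul_right_comm _ |z.re|]
          gcongr
          exact abs_re_le_norm z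
      _ ≤ ‖z‖ ^ n * |z.im| * ‖z‖ + n * |z.im| * ‖z‖ ^ n * ‖z‖ := by gcongr
      _ = (n + 1 : ℕ) * |z.im| * ‖z‖ ^ (n + 1) := by push_cast; ring

section

variable {n : ℕ}

theorem pow_mul_sq_sub_two_nonpos {x : ℝ} (hx0 : 0 ≤ x) (hx : x ≤ √2) :
    x ^ n * (x ^ 2 - 2) ≤ 0 := by
  have : x ^ 2 ≤ 2 := by simpa using pow_le_pow_left₀ hx0 hx 2
  exact mul_nonpos_of_nonneg_of_nonpos (by positivity) (by linarith)

theorem strictMonoOn_pow_mul_sq_sub_two :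
    StrictMonoOn (fun x : ℝ ↦ x ^ n * (x ^ 2 - 2)) (Set.Ici √2) := by
  intro a ha b _ hab
  have ha0 : 0 ≤ a := (sqrt_nonneg 2).trans ha
  have ha2 : 2 ≤ a ^ 2 := by simpa using pow_le_pow_left₀ (sqrt_nonneg 2) ha 2
  calc a ^ n * (a ^ 2 - 2) ≤ b ^ n * (a ^ 2 - 2) := by gcongr
    _ < b ^ n * (b ^ 2 - 2) := by gcongr; exact pow_pos (ha0.trans_lt hab) n

theorem sqrt_two_lt_of_pow_mul_sq_sub_two_eq_one {x : ℝ} (hx : 0 < x)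
    (h : x ^ n * (x ^ 2 - 2) = 1) : √2 < x := by
  by_contra! hle
  linarith [pow_mul_sq_sub_two_nonpos (n := n) hx.le hle]

theorem eq_of_pow_mul_sq_sub_two_eq_one {x y : ℝ} (hx : 0 < x) (hy : 0 < y)
    (hxq : x ^ n * (x ^ 2 - 2) = 1) (hyq : y ^ n * (y ^ 2 - 2) = 1) : x = y :=
  strictMonoOn_pow_mul_sq_sub_two.injOn
    (sqrt_two_lt_of_pow_mul_sq_sub_two_eq_one hx hxq).le
    (sqrt_two_lt_of_pow_mul_sq_sub_two_eq_one hy hyq).le (hxq.trans hyq.symm)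

theorem pos_of_pow_mul_sq_sub_two_eq_one (hn : Odd n) {x : ℝ} (hx : √2 ≤ |x|)
    (h : x ^ n * (x ^ 2 - 2) = 1) : 0 < x := by
  by_contra! hx0
  have hx2 : 2 ≤ x ^ 2 := by simpa using pow_le_pow_left₀ (sqrt_nonneg 2) hx 2
  linarith [mul_nonpos_of_nonpos_of_nonneg (hn.pow_nonpos hx0) (sub_nonneg.2 hx2)]

theorem exists_pow_mul_sq_sub_two_eq_one (n : ℕ) : ∃ μ : ℝ, 0 < μ ∧ μ ^ n * (μ ^ 2 - 2) = 1 := by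
  have hs2 : √2 ≤ 2 := by rw [sqrt_le_left zero_le_two]; norm_num
  have hmem : (1 : ℝ) ∈ Set.Icc (√2 ^ n * (√2 ^ 2 - 2)) (2 ^ n * (2 ^ 2 - 2)) := by
    constructor
    · norm_num
    · have : (1 : ℝ) ≤ 2 ^ n := one_le_pow₀ one_le_two
      linarith
  obtain ⟨μ, hμ, hμq⟩ := intermediate_value_Icc hs2
    (f := fun x : ℝ ↦ x ^ n * (x ^ 2 - 2)) (by fun_prop) hmem
  exact ⟨μ, (sqrt_pos.2 two_pos).trans_le hμ.1, hμq⟩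

theorem Complex.im_eq_zero_of_pow_mul_sq_sub_two_eq_one {z : ℂ} (hz : √2 ≤ ‖z‖)
    (h : z ^ n * (z ^ 2 - 2) = 1) : z.im = 0 := by
  have hr1 : 1 ≤ ‖z‖ := (one_le_sqrt.2 one_le_two).trans hz
  have hnorm : ‖z‖ ^ n * ‖z ^ 2 - 2‖ = 1 := by simpa using congrArg norm h
  have hre : 1 ≤ |z.re| := by
    have hsq : 1 ≤ (z ^ 2).re := by
      have h1 : ‖z ^ 2 - 2‖ ≤ 1 := by
        nlinarith [one_le_pow₀ (n := n) hr1, norm_nonneg (z ^ 2 - 2)]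
      have h2 := (abs_le.1 ((abs_re_le_norm (z ^ 2 - 2)).trans h1)).1
      simp only [sub_re, re_ofNat] at h2
      linarith
    rw [pow_two, mul_re] at hsq
    nlinarith [sq_abs z.re, abs_nonneg z.re, mul_self_nonneg z.im]
  have hconj : ((‖z‖ ^ n) ^ 2 : ℝ) * (z ^ 2).im = -(z ^ n).im := by
    have : ((normSq (z ^ n) : ℝ) : ℂ) * (z ^ 2 - 2) = (starRingEnd ℂ) (z ^ n) := by
      rw [← mul_conj, mul_comm (z ^ n), mul_assoc, h, mul_one]
    have him := congrArg im this
    rwa [im_ofReal_mul, conj_im, normSq_eq_norm_sq, norm_pow, sub_im, im_ofNat, sub_zero] at him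
  have him2 : |(z ^ 2).im| = 2 * |z.re| * |z.im| := by
    rw [pow_two, mul_im, mul_comm z.im, ← two_mul, abs_mul, abs_mul, abs_two, mul_assoc]
  have hle : 2 * |z.re| * (‖z‖ ^ n) ^ 2 * ‖z‖ * |z.im| ≤ n * ‖z‖ ^ n * |z.im| := by
    have := abs_im_pow_mul_norm_le z n
    rw [← abs_neg, ← hconj, abs_mul, him2, abs_of_nonneg (by positivity)] at this
    linarith
  have hlt : n * ‖z‖ ^ n < 2 * |z.re| * (‖z‖ ^ n) ^ 2 * ‖z‖ :=
    calc n * ‖z‖ ^ n < 2 * ‖z‖ ^ (n + 1) * ‖z‖ ^ n := by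
          gcongr; exact natCast_lt_two_mul_pow_succ hz n
      _ ≤ 2 * |z.re| * ‖z‖ ^ (n + 1) * ‖z‖ ^ n := by gcongr; linarith
      _ = 2 * |z.re| * (‖z‖ ^ n) ^ 2 * ‖z‖ := by ring
  by_contra hy
  exact (mul_lt_mul_of_pos_right hlt (abs_pos.2 hy)).not_ge hle

end

/-- For every integer `d ≥ 1`, the polynomial
`q(μ) = μ^(2d−1)(μ²−2) − 1` has exactly one positive real root `μ₀`; moreover
`μ₀ > √2`, and every other complex root of `q` has modulus less than `√2`. -/
theorem stmt4 (d : ℕ) (hd : 1 ≤ d) :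
    ∃ μ₀ : ℝ, Real.sqrt 2 < μ₀ ∧
      μ₀ ^ (2 * d - 1) * (μ₀ ^ 2 - 2) - 1 = 0 ∧
      (∀ x : ℝ, 0 < x → x ^ (2 * d - 1) * (x ^ 2 - 2) - 1 = 0 → x = μ₀) ∧
      (∀ z : ℂ, z ^ (2 * d - 1) * (z ^ 2 - 2) - 1 = 0 →
        z = (μ₀ : ℂ) ∨ ‖z‖ < Real.sqrt 2) := by
  have hodd : Odd (2 * d - 1) := ⟨d - 1, by omega⟩
  obtain ⟨μ₀, hμ₀, hμ₀q⟩ := exists_pow_mul_sq_sub_two_eq_one (2 * d - 1)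
  have huniq : ∀ x : ℝ, 0 < x → x ^ (2 * d - 1) * (x ^ 2 - 2) - 1 = 0 → x = μ₀ :=
    fun x hx hxq ↦ eq_of_pow_mul_sq_sub_two_eq_one hx hμ₀ (sub_eq_zero.1 hxq) hμ₀q
  refine ⟨μ₀, sqrt_two_lt_of_pow_mul_sq_sub_two_eq_one hμ₀ hμ₀q, sub_eq_zero.2 hμ₀q, huniq, ?_⟩
  intro z hz
  refine or_iff_not_imp_right.2 fun hzn ↦ ?_
  rw [not_lt] at hzn
  have hzq := sub_eq_zero.1 hz
  obtain ⟨x, rfl⟩ : ∃ x : ℝ, (x : ℂ) = z :=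
    ⟨z.re, Complex.ext rfl (Complex.im_eq_zero_of_pow_mul_sq_sub_two_eq_one hzn hzq).symm⟩
  rw [Complex.norm_real, Real.norm_eq_abs] at hzn
  have hxq : x ^ (2 * d - 1) * (x ^ 2 - 2) = 1 := by exact_mod_cast hzq
  rw [huniq x (pos_of_pow_mul_sq_sub_two_eq_one hodd hzn hxq) (sub_eq_zero.2 hxq)]
end

section
/- Let f be uniformly distributed on Hom(P_{n,d},0). Then Pr(|Rng(f)| < 3) ≤ 2^{1−n/2}. -/
/-!
Consecutive values of a homomorphism differ by one, so a homomorphism taking fewer than three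
values alternates `0, c, 0, c, …` with `c = f 1 = ±1`: there are at most two of them. On the other
hand, every function vanishing on even vertices and equal to `±1` on the `⌈n/2⌉` odd ones is a
homomorphism, since all edges have odd length. Hence the ratio is at most
`2 / 2^⌈n/2⌉ ≤ 2^(1 - n/2)`.
-/

/-- `f : {0,…,n} → ℤ` is a graph homomorphism from `P_{n,d}` to `ℤ` sending `0` to `0`:
`f 0 = 0` and `|f i − f j| = 1` whenever `|i − j| ∈ {1,3,…,2d+1}`. -/
def PHom (n d : ℕ) (f : Fin (n + 1) → ℤ) : Prop :=
  f 0 = 0 ∧ ∀ i j : Fin (n + 1),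
    (∃ k, k ≤ d ∧ |((i : ℕ) : ℤ) - ((j : ℕ) : ℤ)| = 2 * k + 1) → |f i - f j| = 1

theorem Fin.eq_ite_even_of_forall_eq_or_eq {α : Type*} {n : ℕ} {f : Fin (n + 1) → α} {a b : α}
    (h0 : f 0 = a) (hmem : ∀ i, f i = a ∨ f i = b)
    (hstep : ∀ i : Fin n, f i.succ ≠ f i.castSucc) :
    ∀ i, f i = if Even (i : ℕ) then a else b := by
  intro i
  induction i using Fin.induction with
  | zero => simpa using h0
  | succ i ih =>
    have hne := hstep i
    rw [ih] at hne
    simp only [Fin.val_succ, Fin.val_castSucc, Nat.even_add_one] at hne ⊢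
    split_ifs at hne ⊢ <;> grind

namespace PHom

variable {n d : ℕ} {f : Fin (n + 1) → ℤ}

theorem abs_sub_succ (hf : PHom n d f) (i : Fin n) : |f i.succ - f i.castSucc| = 1 :=
  hf.2 _ _ ⟨0, Nat.zero_le d, by simp⟩

theorem abs_le (hf : PHom n d f) (i : Fin (n + 1)) : |f i| ≤ (i : ℕ) := by
  induction i using Fin.induction with
  | zero => simp [hf.1]
  | succ i ih =>
    have hstep := hf.abs_sub_succ i
    have htri := abs_sub_abs_le_abs_sub (f i.succ) (f i.castSucc)
    simp only [Fin.val_succ, Fin.val_castSucc] at ih ⊢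
    push_cast
    linarith

/-- Odd distances join vertices of opposite parity. -/
theorem of_even_eq_zero (hev : ∀ i : Fin (n + 1), Even (i : ℕ) → f i = 0)
    (hodd : ∀ i : Fin (n + 1), ¬Even (i : ℕ) → |f i| = 1) : PHom n d f := by
  refine ⟨hev 0 (by simp), fun i j ⟨k, _, hk⟩ => ?_⟩
  have hpar : Even (i : ℕ) ↔ ¬Even (j : ℕ) := by
    rcases (abs_eq (by positivity)).mp hk with h | h <;>
      · simp only [Nat.even_iff]; omega
  by_cases hi : Even (i : ℕ)
  · rw [hev i hi, zero_sub, abs_neg]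
    exact hodd j (hpar.mp hi)
  · rw [hev j (by tauto), sub_zero]
    exact hodd i hi

theorem abs_apply_one (hf : PHom n d f) (hn : 0 < n) : |f ⟨1, by omega⟩| = 1 := by
  simpa [hf.1] using hf.abs_sub_succ ⟨0, hn⟩

theorem eq_ite_even_of_ncard_range_lt_three (hf : PHom n d f) (hn : 0 < n)
    (hrange : (Set.range f).ncard < 3) :
    f = fun i : Fin (n + 1) => if Even (i : ℕ) then 0 else f ⟨1, by omega⟩ := by
  set c := f ⟨1, by omega⟩
  have hc : c ≠ 0 := abs_pos.mp <| (hf.abs_apply_one hn).symm ▸ one_pos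
  have hpair : {0, c} = Set.range f := by
    refine Set.eq_of_subset_of_ncard_le ?_ ?_ (Set.finite_range f)
    · rintro x (rfl | rfl)
      exacts [⟨0, hf.1⟩, ⟨_, rfl⟩]
    · rw [Set.ncard_pair hc.symm]; omega
  refine funext <| Fin.eq_ite_even_of_forall_eq_or_eq hf.1 (fun i => ?_) fun i h => ?_
  · simpa [← hpair] using Set.mem_range_self (f := f) i
  · simpa [h] using hf.abs_sub_succ i

end PHom

theorem ncard_setOf_pHom_range_lt_three_le_two {n : ℕ} (d : ℕ) (hn : 0 < n) :
    {f : Fin (n + 1) → ℤ | PHom n d f ∧ (Set.range f).ncard < 3}.ncard ≤ 2 := by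
  set alt : ℤ → Fin (n + 1) → ℤ := fun c i => if Even (i : ℕ) then 0 else c
  have hsub : {f : Fin (n + 1) → ℤ | PHom n d f ∧ (Set.range f).ncard < 3} ⊆ alt '' {1, -1} := by
    rintro f ⟨hf, hrange⟩
    exact ⟨_, (abs_eq zero_le_one).mp (hf.abs_apply_one hn),
      (hf.eq_ite_even_of_ncard_range_lt_three hn hrange).symm⟩
  calc _ ≤ (alt '' {1, -1}).ncard := Set.ncard_le_ncard hsub (Set.toFinite _)
    _ ≤ ({1, -1} : Set ℤ).ncard := Set.ncard_image_le (Set.toFinite _)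
    _ = 2 := Set.ncard_pair (by norm_num)

/-- Encodes `Ω₀`: the sign at the odd vertex `2k + 1` is read off `s k`. -/
def oddSigns (n : ℕ) (s : Fin ((n + 1) / 2) → Bool) : Fin (n + 1) → ℤ := fun i =>
  if h : Even (i : ℕ) then 0
  else if s ⟨i / 2, by rw [Nat.not_even_iff_odd, Nat.odd_iff] at h; omega⟩ then 1 else -1

theorem oddSigns_injective (n : ℕ) : Function.Injective (oddSigns n) := by
  intro s t hst
  funext k
  have hk := congrFun hst ⟨2 * k + 1, by omega⟩
  have hodd : ¬Even (2 * (k : ℕ) + 1) := by simp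
  have hhalf : (2 * (k : ℕ) + 1) / 2 = k := by omega
  simp only [oddSigns, hodd, hhalf, dite_false] at hk
  revert hk
  cases s k <;> cases t k <;> simp

theorem pHom_oddSigns (n d : ℕ) (s : Fin ((n + 1) / 2) → Bool) : PHom n d (oddSigns n s) := by
  refine PHom.of_even_eq_zero (fun i hi => by simp [oddSigns, hi]) fun i hi => ?_
  simp only [oddSigns, hi, dite_false]
  split_ifs <;> simp

theorem finite_setOf_pHom (n d : ℕ) : {f : Fin (n + 1) → ℤ | PHom n d f}.Finite := by
  refine (Set.Finite.pi fun _ => Set.finite_Icc (-(n : ℤ)) n).subset fun f hf => ?_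
  refine Set.mem_univ_pi.mpr fun i => ?_
  have hi : ((i : ℕ) : ℤ) ≤ n := by exact_mod_cast Nat.lt_succ_iff.mp i.isLt
  exact abs_le.mp ((hf.abs_le i).trans hi)

theorem two_pow_le_ncard_setOf_pHom (n d : ℕ) :
    2 ^ ((n + 1) / 2) ≤ {f : Fin (n + 1) → ℤ | PHom n d f}.ncard := by
  calc 2 ^ ((n + 1) / 2) = (Set.range (oddSigns n)).ncard := by
        rw [← Nat.card_coe_set_eq, Nat.card_range_of_injective (oddSigns_injective n)]
        simp
    _ ≤ _ := Set.ncard_le_ncard (Set.range_subset_iff.mpr (pHom_oddSigns n d))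
        (finite_setOf_pHom n d)

theorem stmt8_general (n d : ℕ) (hn : 0 < n) :
    (Set.ncard {f : Fin (n + 1) → ℤ | PHom n d f ∧ (Set.range f).ncard < 3} : ℝ) /
      (Set.ncard {f : Fin (n + 1) → ℤ | PHom n d f} : ℝ) ≤
        (2 : ℝ) ^ (1 - (n : ℝ) / 2) := by
  set m := (n + 1) / 2
  have hnum : (Set.ncard {f : Fin (n + 1) → ℤ | PHom n d f ∧ (Set.range f).ncard < 3} : ℝ) ≤ 2 :=
    mod_cast ncard_setOf_pHom_range_lt_three_le_two d hn
  have hden : (2 : ℝ) ^ m ≤ (Set.ncard {f : Fin (n + 1) → ℤ | PHom n d f} : ℝ) :=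
    mod_cast two_pow_le_ncard_setOf_pHom n d
  have hm : (n : ℝ) / 2 ≤ m := by
    rw [div_le_iff₀ two_pos]
    exact_mod_cast (by omega : n ≤ m * 2)
  calc _ ≤ (2 : ℝ) / 2 ^ m := div_le_div₀ zero_le_two hnum (by positivity) hden
    _ = (2 : ℝ) ^ (1 - (m : ℝ)) := by
        rw [Real.rpow_sub two_pos, Real.rpow_one, Real.rpow_natCast]
    _ ≤ (2 : ℝ) ^ (1 - (n : ℝ) / 2) := Real.rpow_le_rpow_of_exponent_le one_le_two (by linarith)

/-- If `f` is uniformly distributed on `Hom(P_{n,d},0)` then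
`Pr(|Rng f| < 3) ≤ 2^(1−n/2)`. -/
theorem stmt8 (n d : ℕ) (hn : 0 < n) (hd : 0 < d) :
    (Set.ncard {f : Fin (n + 1) → ℤ | PHom n d f ∧ (Set.range f).ncard < 3} : ℝ) /
      (Set.ncard {f : Fin (n + 1) → ℤ | PHom n d f} : ℝ) ≤
        (2 : ℝ) ^ (1 - (n : ℝ) / 2) :=
  stmt8_general n d hn
end

section
/- Let f ∈ Hom(P_{n,d},0). If for some indices i and m ≥ 1 one has f(i+m) − f(i) ≥ 3, then m ≥ 2d+3. Moreover, if m = 2d+3 then necessarily (f(i+1)−f(i), f(i+2)−f(i), ..., f(i+2d+3)−f(i)) = (1,2,1,2,...,1,2,1,2,3). -/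
/-!
Every odd distance `g ≤ 2d+1` is an edge of `P_{n,d}`, so `f` rises by at most `1` across it,
and every distance `g ≤ 2d+2` is at most one step plus such an edge, so `f` rises by at most `2`.
A rise of `3` over `2d+3` steps therefore makes all these bounds tight: for even `j` the rise
over `j` is `2` because `2d+3-j` is an edge, and then for odd `j` it is `1` because `j+1` is even.
-/

def IsPndHom (n d : ℕ) (f : ℕ → ℤ) : Prop :=
  ∀ i j : ℕ, i ≤ n → j ≤ n → (∃ k, k ≤ d ∧ |(i : ℤ) - (j : ℤ)| = 2 * k + 1) → |f i - f j| = 1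

namespace IsPndHom

variable {n d : ℕ} {f : ℕ → ℤ}

theorem sub_le_one_of_odd (hf : IsPndHom n d f) {a g : ℕ} (hg : Odd g) (hgd : g ≤ 2 * d + 1)
    (hn : a + g ≤ n) : f (a + g) - f a ≤ 1 := by
  obtain ⟨k, rfl⟩ := hg
  have hedge : |((a + (2 * k + 1) : ℕ) : ℤ) - (a : ℤ)| = 2 * k + 1 := by
    push_cast
    rw [add_sub_cancel_left, abs_of_nonneg (by positivity)]
  exact (le_abs_self _).trans (hf _ _ hn (by omega) ⟨k, by omega, hedge⟩).le

theorem sub_le_two (hf : IsPndHom n d f) {a g : ℕ} (hgd : g ≤ 2 * d + 2) (hn : a + g ≤ n) :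
    f (a + g) - f a ≤ 2 := by
  rcases Nat.even_or_odd g with ⟨_ | t, rfl⟩ | hodd
  · simp
  · have hstep := hf.sub_le_one_of_odd (a := a) odd_one (by omega) (by omega)
    have hedge := hf.sub_le_one_of_odd (a := a + 1) (g := 2 * t + 1) ⟨t, rfl⟩ (by omega)
      (by omega)
    rw [show a + 1 + (2 * t + 1) = a + (t + 1 + (t + 1)) by ring] at hedge
    linarith
  · linarith [hf.sub_le_one_of_odd hodd (by rcases hodd with ⟨t, rfl⟩; omega) hn]

section RiseOfThree

variable (hf : IsPndHom n d f) {a : ℕ} (hn : a + (2 * d + 3) ≤ n)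
  (h3 : 3 ≤ f (a + (2 * d + 3)) - f a)
include hf hn h3

theorem sub_eq_two_of_even {j : ℕ} (hj : Even j) (hj0 : 0 < j) (hjd : j ≤ 2 * d + 2) :
    f (a + j) - f a = 2 := by
  obtain ⟨t, rfl⟩ := hj
  have hedge := hf.sub_le_one_of_odd (a := a + (t + t)) (g := 2 * (d + 1 - t) + 1)
    ⟨d + 1 - t, rfl⟩ (by omega) (by omega)
  rw [show a + (t + t) + (2 * (d + 1 - t) + 1) = a + (2 * d + 3) by omega] at hedge
  linarith [hf.sub_le_two (a := a) (g := t + t) hjd (by omega)]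

theorem sub_eq_one_of_odd {j : ℕ} (hj : Odd j) (hjd : j ≤ 2 * d + 1) :
    f (a + j) - f a = 1 := by
  have hnext := sub_eq_two_of_even hf hn h3 (j := j + 1) (hj.add_one) (by omega) (by omega)
  have hstep := hf.sub_le_one_of_odd (a := a + j) odd_one (by omega) (by omega)
  rw [add_assoc] at hstep
  linarith [hf.sub_le_one_of_odd (a := a) hj hjd (by omega)]

theorem sub_eq_three : f (a + (2 * d + 3)) - f a = 3 := by
  have hedge := hf.sub_le_one_of_odd (a := a + 2) (g := 2 * d + 1) ⟨d, rfl⟩ le_rfl (by omega)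
  rw [show a + 2 + (2 * d + 1) = a + (2 * d + 3) by omega] at hedge
  linarith [sub_eq_two_of_even hf hn h3 (j := 2) even_two (by omega) (by omega)]

end RiseOfThree

end IsPndHom

theorem stmt10_general (n d : ℕ) (f : ℕ → ℤ)
    (hf : ∀ i j : ℕ, i ≤ n → j ≤ n →
      (∃ k, k ≤ d ∧ |(i : ℤ) - (j : ℤ)| = 2 * k + 1) → |f i - f j| = 1)
    (i m : ℕ) (him : i + m ≤ n) (h3 : 3 ≤ f (i + m) - f i) :
    2 * d + 3 ≤ m ∧
    (m = 2 * d + 3 → ∀ j : ℕ, 1 ≤ j → j ≤ 2 * d + 3 →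
      f (i + j) - f i = if j = 2 * d + 3 then 3 else if Odd j then 1 else 2) := by
  have hom : IsPndHom n d f := hf
  have hlong : 2 * d + 3 ≤ m := by
    by_contra! hshort
    linarith [hom.sub_le_two (a := i) (g := m) (by omega) him]
  refine ⟨hlong, ?_⟩
  rintro rfl j hj1 hj2
  split_ifs with htop hodd
  · subst htop
    exact hom.sub_eq_three him h3
  · exact hom.sub_eq_one_of_odd him h3 hodd (by rcases hodd with ⟨t, rfl⟩; omega)
  · exact hom.sub_eq_two_of_even him h3 (Nat.not_odd_iff_even.mp hodd) (by omega) (by omega)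

/-- Let `f ∈ Hom(P_{n,d},0)`. If `f(i+m) − f(i) ≥ 3` for some
`0 ≤ i ≤ i+m ≤ n` with `m ≥ 1`, then `m ≥ 2d+3`. Moreover, if `m = 2d+3` then
necessarily `(f(i+1)−f(i), …, f(i+2d+3)−f(i)) = (1,2,1,2,…,1,2,3)`. -/
theorem stmt10 (n d : ℕ) (f : ℕ → ℤ) (hf0 : f 0 = 0)
    (hf : ∀ i j : ℕ, i ≤ n → j ≤ n →
      (∃ k, k ≤ d ∧ |(i : ℤ) - (j : ℤ)| = 2 * k + 1) → |f i - f j| = 1)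
    (i m : ℕ) (him : i + m ≤ n) (hm : 1 ≤ m) (h3 : 3 ≤ f (i + m) - f i) :
    2 * d + 3 ≤ m ∧
    (m = 2 * d + 3 → ∀ j : ℕ, 1 ≤ j → j ≤ 2 * d + 3 →
      f (i + j) - f i = if j = 2 * d + 3 then 3 else if Odd j then 1 else 2) :=
  stmt10_general n d f hf i m him h3
end

section
/- Fix positive integers n, d, and r ≥ 0. The number of subsets I ⊂ {1,...,n} satisfying: min I > 2d+1, |I| = r, min I is even, and for consecutive elements s < s' of I the difference s'−s is odd and at least 2d+1, equals the binomial coefficient C(⌊(n−r−1)/2⌋ − (d−1)r, r). -/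
/-! The admissible sequences are exactly `s j = 2 * t j + ((2d-1)(j+1) + 3)` with `t` strictly
increasing: the gap `s (j+1) - s j` is then `2 (t (j+1) - t j) + 2d - 1`, which is odd and at least
`2d+1` precisely when `t (j+1) > t j`, and `s (r-1) ≤ n` becomes `t (r-1) < ⌊(n-r-1)/2⌋ - (d-1)r`.
Strictly increasing `t : Fin r → ℕ` bounded by `M` are the `r`-subsets of `{0, …, M-1}`. -/

open Set

theorem Fin.forall_of_val_eq_succ {r : ℕ} {P : Fin r → Prop}
    (zero : ∀ j : Fin r, (j : ℕ) = 0 → P j)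
    (succ : ∀ j k : Fin r, (k : ℕ) = j + 1 → P j → P k) (j : Fin r) : P j := by
  cases r with
  | zero => exact j.elim0
  | succ m =>
    induction j using Fin.induction with
    | zero => exact zero 0 rfl
    | succ i ih => exact succ i.castSucc i.succ (by simp) ih

theorem Fin.strictMono_of_lt_of_val_eq_succ {α : Type*} [Preorder α] {r : ℕ} {f : Fin r → α}
    (h : ∀ j k : Fin r, (k : ℕ) = j + 1 → f j < f k) : StrictMono f := by
  cases r with
  | zero => exact fun i => i.elim0
  | succ m => exact Fin.strictMono_iff_lt_succ.2 fun i => h _ _ (by simp)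

theorem ncard_setOf_strictMono_lt (r M : ℕ) :
    {t : Fin r → ℕ | StrictMono t ∧ ∀ j, t j < M}.ncard = M.choose r := by
  let e : {t : Fin r → ℕ | StrictMono t ∧ ∀ j, t j < M} ≃ (Fin r ↪o Fin M) :=
    { toFun t := OrderEmbedding.ofStrictMono (fun j => ⟨t.1 j, t.2.2 j⟩) fun _ _ h => t.2.1 h
      invFun f := ⟨fun j => f j, fun _ _ h => f.strictMono h, fun j => (f j).2⟩
      left_inv _ := rfl
      right_inv _ := rfl }
  rw [← Nat.card_coe_set_eq, Nat.card_congr (e.trans powersetCard.ofFinEmbEquiv),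
    powersetCard.card, Nat.card_eq_fintype_card, Fintype.card_fin]

def Admissible (n d r : ℕ) : Set (Fin r → ℕ) :=
  {s : Fin r → ℕ | StrictMono s ∧ (∀ j, s j ≤ n) ∧ (∀ j, 2 * d + 1 < s j) ∧
    (∀ j : Fin r, (j : ℕ) = 0 → Even (s j)) ∧
    (∀ j k : Fin r, (k : ℕ) = (j : ℕ) + 1 → Odd (s k - s j) ∧ 2 * d + 1 ≤ s k - s j)}

def admissibleOffset (d j : ℕ) : ℕ := (2 * d - 1) * (j + 1) + 3

def stretch (d : ℕ) {r : ℕ} (t : Fin r → ℕ) (j : Fin r) : ℕ := 2 * t j + admissibleOffset d j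

theorem stretch_injective (d r : ℕ) : Function.Injective (stretch d (r := r)) :=
  fun t t' h => funext fun j => by
    have := congrFun h j
    simp only [stretch] at this
    omega

section

variable {n d r : ℕ}

theorem admissibleOffset_zero (hd : 0 < d) : admissibleOffset d 0 = 2 * d + 2 := by
  simp only [admissibleOffset]
  omega

theorem admissibleOffset_succ (d j : ℕ) :
    admissibleOffset d (j + 1) = admissibleOffset d j + (2 * d - 1) := by
  simp only [admissibleOffset]
  ring

theorem admissibleOffset_mono (d : ℕ) : Monotone (admissibleOffset d) := by
  intro i j hij
  simp only [admissibleOffset]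
  gcongr

theorem two_mul_add_admissibleOffset_le_iff (hd : 0 < d) (hr : 0 < r) (u n : ℕ) :
    2 * u + admissibleOffset d (r - 1) ≤ n ↔ u < (n - r - 1) / 2 - (d - 1) * r := by
  have h : admissibleOffset d (r - 1) = 2 * ((d - 1) * r) + r + 3 := by
    obtain ⟨e, rfl⟩ : ∃ e, d = e + 1 := ⟨d - 1, by omega⟩
    obtain ⟨q, rfl⟩ : ∃ q, r = q + 1 := ⟨r - 1, by omega⟩
    rw [admissibleOffset, show 2 * (e + 1) - 1 = 2 * e + 1 by omega]
    simp only [Nat.add_sub_cancel]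
    ring
  omega

theorem exists_eq_two_mul_add_admissibleOffset (hd : 0 < d) {s : Fin r → ℕ}
    (hs : s ∈ Admissible n d r) (j : Fin r) : ∃ u, s j = 2 * u + admissibleOffset d j := by
  obtain ⟨-, -, hlow, heven, hgap⟩ := hs
  induction j using Fin.forall_of_val_eq_succ with
  | zero j hj =>
    obtain ⟨u, hu⟩ := heven j hj
    have := hlow j
    exact ⟨u - d - 1, by rw [hj, admissibleOffset_zero hd]; omega⟩
  | succ j k hk ih =>
    obtain ⟨u, hu⟩ := ih
    obtain ⟨⟨g, hg⟩, hge⟩ := hgap j k hk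
    exact ⟨u + g - d + 1, by rw [hk, admissibleOffset_succ]; omega⟩

theorem admissible_subset_image_stretch (hd : 0 < d) :
    Admissible n d r ⊆
      stretch d '' {t | StrictMono t ∧ ∀ j, t j < (n - r - 1) / 2 - (d - 1) * r} := by
  intro s hs
  choose t ht using exists_eq_two_mul_add_admissibleOffset hd hs
  obtain ⟨-, hle, -, -, hgap⟩ := hs
  have hmono : StrictMono t := Fin.strictMono_of_lt_of_val_eq_succ fun j k hk => by
    have hjk := (hgap j k hk).2
    rw [ht j, ht k, hk, admissibleOffset_succ] at hjk
    omega
  refine ⟨t, ⟨hmono, fun j => ?_⟩, funext fun j => (ht j).symm⟩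
  have hr : 0 < r := j.pos
  let last : Fin r := ⟨r - 1, by omega⟩
  have hlast : 2 * t last + admissibleOffset d (r - 1) ≤ n := ht last ▸ hle last
  have hj : t j ≤ t last := hmono.monotone (Fin.le_def.2 (by simp only [last]; omega))
  rw [← two_mul_add_admissibleOffset_le_iff hd hr]
  omega

theorem image_stretch_subset_admissible (hd : 0 < d) :
    stretch d '' {t | StrictMono t ∧ ∀ j, t j < (n - r - 1) / 2 - (d - 1) * r} ⊆
      Admissible n d r := by
  rintro _ ⟨t, ⟨hmono, hlt⟩, rfl⟩
  have hzero := admissibleOffset_zero hd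
  refine ⟨fun i j hij => ?_, fun j => ?_, fun j => ?_, fun j hj => ?_, fun j k hk => ?_⟩
  · have := admissibleOffset_mono d (Fin.le_def.1 hij.le)
    have := hmono hij
    simp only [stretch]
    omega
  · have hr : 0 < r := j.pos
    have := (two_mul_add_admissibleOffset_le_iff hd hr (t j) n).2 (hlt j)
    have := admissibleOffset_mono d (show (j : ℕ) ≤ r - 1 by omega)
    simp only [stretch]
    omega
  · have := admissibleOffset_mono d (Nat.zero_le j)
    simp only [stretch]
    omega
  · simp only [stretch, hj, hzero]
    exact ⟨t j + d + 1, by ring⟩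
  · have := hmono (Fin.lt_def.2 (show (j : ℕ) < k by omega))
    simp only [stretch, hk, admissibleOffset_succ]
    exact ⟨⟨t k - t j + d - 1, by omega⟩, by omega⟩

theorem admissible_eq_image_stretch (hd : 0 < d) :
    Admissible n d r =
      stretch d '' {t | StrictMono t ∧ ∀ j, t j < (n - r - 1) / 2 - (d - 1) * r} :=
  (admissible_subset_image_stretch hd).antisymm (image_stretch_subset_admissible hd)

end

theorem stmt11_general (n d r : ℕ) (hd : 0 < d) :
    Set.ncard {s : Fin r → ℕ | StrictMono s ∧ (∀ j, s j ≤ n) ∧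
        (∀ j, 2 * d + 1 < s j) ∧
        (∀ j : Fin r, (j : ℕ) = 0 → Even (s j)) ∧
        (∀ j k : Fin r, (k : ℕ) = (j : ℕ) + 1 →
          Odd (s k - s j) ∧ 2 * d + 1 ≤ s k - s j)} =
      Nat.choose ((n - r - 1) / 2 - (d - 1) * r) r := by
  change (Admissible n d r).ncard = _
  rw [admissible_eq_image_stretch hd, ncard_image_of_injective _ (stretch_injective d r),
    ncard_setOf_strictMono_lt]

/-- Fix positive integers `n`, `d` and `r ≥ 0`. The number of subsets
`I ⊂ {1,…,n}`, described by their increasing enumeration `2d+1 < s 0 < s 1 < ⋯ < s (r-1) ≤ n`,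
with `s 0` even and each gap `s (j+1) − s j` odd and at least `2d+1`, equals
`C(⌊(n−r−1)/2⌋ − (d−1)r, r)` (interpreted as `0` when the top argument is less than `r`). -/
theorem stmt11 (n d r : ℕ) (hn : 0 < n) (hd : 0 < d) :
    Set.ncard {s : Fin r → ℕ | StrictMono s ∧ (∀ j, s j ≤ n) ∧
        (∀ j, 2 * d + 1 < s j) ∧
        (∀ j : Fin r, (j : ℕ) = 0 → Even (s j)) ∧
        (∀ j k : Fin r, (k : ℕ) = (j : ℕ) + 1 →
          Odd (s k - s j) ∧ 2 * d + 1 ≤ s k - s j)} =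
      Nat.choose ((n - r - 1) / 2 - (d - 1) * r) r :=
  stmt11_general n d r hd
end

section
/- Fix positive integers n (even), d, and r ≥ 1. The number of subsets I of ℤ/nℤ such that: |I| = 2r, for any two distinct elements x, y of I the clockwise distance from x to its successor in I is odd and at least 2d+3, equals (n/(2r))·C(n/2 − (2d+1)r − 1, 2r − 1). -/
/-- Clockwise distance on the discrete torus `{0,…,n−1}`: the smallest `k ≥ 0` with
`x + k ≡ y (mod n)`. -/
def rhoPlus (n : ℕ) (x y : Fin n) : ℕ := ((y : ℕ) + n - (x : ℕ)) % n

/-!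
Count pairs `(I, x)` with `x ∈ I` twice. Each admissible `I` contributes `2r` pairs; on the
other hand translation by `-x` moves `x` to `0` and preserves admissibility, so there are `n`
times as many pairs as admissible sets containing `0`. A subset of `ℤ/nℤ` containing `0` is the
set of first points of the blocks of a unique composition of `n`, and the cyclic gaps of the set
are exactly the blocks. Admissible sets through `0` therefore correspond to compositions of `n`
into `2r` odd parts `≥ 2d + 3`; writing each part as `2g + 2d + 3` turns these into solutions of
`g₁ + ⋯ + g₂ᵣ = n/2 - (2d + 3)r` in `ℕ`, counted by stars and bars.
-/

open Finset Pointwise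

section rhoPlus

variable {n : ℕ}

lemma rhoPlus_of_le {x y : Fin n} (h : x ≤ y) : rhoPlus n x y = y - x := by
  rw [rhoPlus, show (y : ℕ) + n - x = y - x + n by omega, Nat.add_mod_right,
    Nat.mod_eq_of_lt (by omega)]

lemma rhoPlus_of_lt {x y : Fin n} (h : y < x) : rhoPlus n x y = n + y - x := by
  rw [rhoPlus, Nat.mod_eq_of_lt (by omega)]
  omega

lemma rhoPlus_eq_val_sub (x y : Fin n) : rhoPlus n x y = (y - x : Fin n) := by
  rw [rhoPlus, Fin.sub_def]
  congr 1
  omega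

lemma rhoPlus_add_left [NeZero n] (g x y : Fin n) :
    rhoPlus n (g + x) (g + y) = rhoPlus n x y := by
  rw [rhoPlus_eq_val_sub, rhoPlus_eq_val_sub, add_sub_add_left_eq_sub]

def CyclicGapsSatisfy (P : ℕ → Prop) (I : Finset (Fin n)) : Prop :=
  ∀ x ∈ I, ∀ y ∈ I, x ≠ y → (∀ z ∈ I, z ≠ x → rhoPlus n x y ≤ rhoPlus n x z) →
    P (rhoPlus n x y)

lemma CyclicGapsSatisfy.vadd [NeZero n] {P : ℕ → Prop} {I : Finset (Fin n)}
    (hI : CyclicGapsSatisfy P I) (g : Fin n) : CyclicGapsSatisfy P (g +ᵥ I) := by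
  simp only [CyclicGapsSatisfy, mem_vadd_finset, vadd_eq_add, forall_exists_index, and_imp]
  rintro _ x hx rfl _ y hy rfl hxy hmin
  rw [rhoPlus_add_left] at hmin ⊢
  refine hI x hx y hy (fun h => hxy (h ▸ rfl)) fun z hz hzx => ?_
  simpa only [rhoPlus_add_left] using hmin (g + z) z hz rfl (by simpa using hzx)

lemma cyclicGapsSatisfy_vadd_iff [NeZero n] {P : ℕ → Prop} {I : Finset (Fin n)} (g : Fin n) :
    CyclicGapsSatisfy P (g +ᵥ I) ↔ CyclicGapsSatisfy P I :=
  ⟨fun h => neg_vadd_vadd g I ▸ h.vadd (-g), fun h => h.vadd g⟩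

end rhoPlus

theorem card_mul_eq_card_mul_card_zero_mem {G : Type*} [AddGroup G] [Fintype G] [DecidableEq G]
    {Q : Finset G → Prop} (hQ : ∀ (g : G) (I : Finset G), Q (g +ᵥ I) ↔ Q I) (m : ℕ) :
    Nat.card {I : Finset G // I.card = m ∧ Q I} * m =
      Nat.card G * Nat.card {I : Finset G // 0 ∈ I ∧ I.card = m ∧ Q I} := by
  classical
  set B : Finset (Finset G) := {I | I.card = m ∧ Q I}
  have hB : ∀ I ∈ B, I.card = m ∧ Q I := fun I hI => (mem_filter.1 hI).2
  have hvadd (b c : G) (I : Finset G) (hI : I ∈ {I ∈ B | c ∈ I}) :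
      b +ᵥ I ∈ {I ∈ B | b + c ∈ I} := by
    rw [mem_filter] at hI ⊢
    rw [mem_filter, card_vadd_finset, hQ]
    exact ⟨⟨mem_univ _, hB I hI.1⟩, (vadd_mem_vadd_finset_iff b).2 hI.2⟩
  have hfiber (a : G) : #{I ∈ B | a ∈ I} = #{I ∈ B | 0 ∈ I} :=
    card_nbij' (fun I => -a +ᵥ I) (fun I => a +ᵥ I)
      (fun I hI => by simpa using hvadd (-a) a I hI)
      (fun I hI => by simpa using hvadd a 0 I hI)
      (fun I _ => vadd_neg_vadd a I) (fun I _ => neg_vadd_vadd a I)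
  have hsum : ∑ I ∈ B, I.card = #B * m := sum_const_nat fun I hI => (hB I hI).1
  rw [Nat.card_eq_fintype_card, Nat.card_eq_fintype_card, Nat.card_eq_fintype_card,
    Fintype.card_subtype, Fintype.card_subtype, ← hsum, sum_card hfiber, filter_filter]
  simp only [and_comm]

namespace Composition

variable {n : ℕ} (c : Composition n)

lemma sizeUpTo_lt (i : Fin c.length) : c.sizeUpTo i < n :=
  (c.sizeUpTo_strict_mono i.2).trans_le (c.sizeUpTo_le _)

def start (i : Fin c.length) : Fin n := ⟨c.sizeUpTo i, c.sizeUpTo_lt i⟩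

lemma castSucc_start (i : Fin c.length) : (c.start i).castSucc = c.boundary i.castSucc := rfl

lemma start_strictMono : StrictMono c.start := fun i j h => by
  rw [← Fin.castSucc_lt_castSucc_iff, castSucc_start, castSucc_start]
  exact c.boundary.strictMono (Fin.castSucc_lt_castSucc_iff.2 h)

def starts : Finset (Fin n) := univ.map ⟨c.start, c.start_strictMono.injective⟩

lemma mem_starts {x : Fin n} : x ∈ c.starts ↔ ∃ i, c.start i = x := by simp [starts]

lemma card_starts : c.starts.card = c.length := by simp [starts]

lemma insert_last_map_starts :
    insert (Fin.last n) (c.starts.map Fin.castSuccEmb) = c.boundaries := by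
  rw [boundaries, Fin.univ_castSuccEmb, map_cons, cons_eq_insert, starts, map_map, map_map]
  simp only [RelEmbedding.coe_toEmbedding, boundary_last]
  rfl

lemma starts_injective : Function.Injective (starts : Composition n → Finset (Fin n)) := by
  intro c c' h
  apply (compositionEquiv n).injective
  apply CompositionAsSet.ext
  simp only [compositionEquiv, Equiv.coe_fn_mk, toCompositionAsSet_boundaries]
  rw [← insert_last_map_starts, h, insert_last_map_starts]

lemma exists_starts_eq [NeZero n] {J : Finset (Fin n)} (hJ : 0 ∈ J) :
    ∃ c : Composition n, c.starts = J := by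
  let B : CompositionAsSet n :=
    ⟨insert (Fin.last n) (J.map Fin.castSuccEmb), by simp [hJ], by simp⟩
  refine ⟨B.toComposition, ?_⟩
  have h := B.toComposition.insert_last_map_starts
  rw [B.toComposition_boundaries] at h
  apply map_injective Fin.castSuccEmb
  rw [← erase_insert (s := J.map _) (a := Fin.last n) (by simp),
    ← erase_insert (s := B.toComposition.starts.map _) (a := Fin.last n) (by simp)]
  exact congrArg (fun s => Finset.erase s (Fin.last n)) h

lemma zero_mem_starts [NeZero n] : 0 ∈ c.starts :=
  c.mem_starts.2 ⟨⟨0, c.length_pos_of_pos (Nat.pos_of_neZero n)⟩, Fin.ext c.sizeUpTo_zero⟩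

noncomputable def startsEquiv [NeZero n] : Composition n ≃ {J : Finset (Fin n) // 0 ∈ J} :=
  Equiv.ofBijective (fun c => ⟨c.starts, c.zero_mem_starts⟩)
    ⟨fun _ _ h => starts_injective (congrArg Subtype.val h),
      fun J => (exists_starts_eq J.2).imp fun _ h => Subtype.ext h⟩

lemma rhoPlus_start_of_le {i j : Fin c.length} (h : i ≤ j) :
    rhoPlus n (c.start i) (c.start j) = c.sizeUpTo j - c.sizeUpTo i :=
  rhoPlus_of_le (c.start_strictMono.monotone h)

lemma rhoPlus_start_of_lt {i j : Fin c.length} (h : j < i) :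
    rhoPlus n (c.start i) (c.start j) = n + c.sizeUpTo j - c.sizeUpTo i :=
  rhoPlus_of_lt (c.start_strictMono h)

lemma blocksFun_le_rhoPlus_start {i j : Fin c.length} (h : j ≠ i) :
    c.blocksFun i ≤ rhoPlus n (c.start i) (c.start j) := by
  have hsucc := c.sizeUpTo_succ' i
  rcases h.lt_or_gt with h | h
  · rw [c.rhoPlus_start_of_lt h]
    have := c.sizeUpTo_le (i + 1)
    omega
  · rw [c.rhoPlus_start_of_le h.le]
    have := c.monotone_sizeUpTo (show (i : ℕ) + 1 ≤ j from h)
    omega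

lemma exists_rhoPlus_start_eq_blocksFun (hc : 2 ≤ c.length) (i : Fin c.length) :
    ∃ j, j ≠ i ∧ rhoPlus n (c.start i) (c.start j) = c.blocksFun i := by
  have hsucc := c.sizeUpTo_succ' i
  by_cases hi : (i : ℕ) + 1 < c.length
  · refine ⟨⟨i + 1, hi⟩, by simp [Fin.ext_iff], ?_⟩
    rw [c.rhoPlus_start_of_le (Fin.le_def.2 (by simp))]
    dsimp only [Fin.val_mk]
    omega
  · have hlast : (i : ℕ) + 1 = c.length := by omega
    refine ⟨⟨0, by omega⟩, by simp [Fin.ext_iff]; omega, ?_⟩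
    rw [c.rhoPlus_start_of_lt (Fin.lt_def.2 (by simp; omega)), sizeUpTo_zero]
    rw [hlast, sizeUpTo_length] at hsucc
    omega

lemma cyclicGapsSatisfy_starts_iff {P : ℕ → Prop} (hc : 2 ≤ c.length) :
    CyclicGapsSatisfy P c.starts ↔ ∀ b ∈ c.blocks, P b := by
  rw [← c.ofFn_blocksFun, List.forall_mem_ofFn_iff]
  constructor
  · intro h i
    obtain ⟨j, hji, hj⟩ := c.exists_rhoPlus_start_eq_blocksFun hc i
    rw [← hj]
    refine h _ (c.mem_starts.2 ⟨i, rfl⟩) _ (c.mem_starts.2 ⟨j, rfl⟩)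
      (c.start_strictMono.injective.ne hji.symm) ?_
    rintro _ hz hzi
    obtain ⟨k, rfl⟩ := c.mem_starts.1 hz
    exact hj ▸ c.blocksFun_le_rhoPlus_start fun h => hzi (h ▸ rfl)
  · intro h x hx y hy hxy hmin
    obtain ⟨i, rfl⟩ := c.mem_starts.1 hx
    obtain ⟨j, rfl⟩ := c.mem_starts.1 hy
    obtain ⟨k, hki, hk⟩ := c.exists_rhoPlus_start_eq_blocksFun hc i
    have hle := hmin _ (c.mem_starts.2 ⟨k, rfl⟩) (c.start_strictMono.injective.ne hki)
    rw [le_antisymm (hk ▸ hle) (c.blocksFun_le_rhoPlus_start fun h => hxy (by rw [h]))]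
    exact h i

def equivTuplesOfLength (m : ℕ) :
    {c : Composition n // c.length = m} ≃ {f : Fin m → ℕ // (∀ i, 0 < f i) ∧ ∑ i, f i = n} where
  toFun c := ⟨fun i => c.1.blocksFun (Fin.cast c.2.symm i), fun _ => c.1.one_le_blocksFun _,
    ((finCongr c.2.symm).sum_comp c.1.blocksFun).trans c.1.sum_blocksFun⟩
  invFun f := ⟨⟨List.ofFn f.1, by simpa [List.forall_mem_ofFn_iff] using f.2.1,
    by rw [List.sum_ofFn, f.2.2]⟩, List.length_ofFn⟩
  left_inv c := Subtype.ext <| Composition.ext <| List.ext_getElem (by simp [c.2]) fun _ _ _ => by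
    simp [blocksFun]
  right_inv f := Subtype.ext <| funext fun i => by simp [blocksFun]

lemma card_length_eq_card_tuples {P : ℕ → Prop} (hP : ∀ k, P k → 0 < k) (m : ℕ) :
    Nat.card {c : Composition n // c.length = m ∧ ∀ b ∈ c.blocks, P b} =
      Nat.card {f : Fin m → ℕ // ∑ i, f i = n ∧ ∀ i, P (f i)} := by
  have hblocks (c : {c : Composition n // c.length = m}) :
      (∀ b ∈ c.1.blocks, P b) ↔ ∀ i, P ((equivTuplesOfLength m c).1 i) := by
    rw [← c.1.ofFn_blocksFun, List.forall_mem_ofFn_iff]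
    exact (finCongr c.2.symm).forall_congr_right.symm
  refine Nat.card_congr <| (Equiv.subtypeSubtypeEquivSubtypeInter _ _).symm.trans <|
    ((equivTuplesOfLength m).subtypeEquiv (q := fun f => ∀ i, P (f.1 i)) hblocks).trans <|
    (Equiv.subtypeSubtypeEquivSubtypeInter (fun f : Fin m → ℕ => (∀ i, 0 < f i) ∧ ∑ i, f i = n)
      fun f => ∀ i, P (f i)).trans <| Equiv.subtypeEquivRight fun f => ?_
  exact ⟨fun h => ⟨h.1.2, h.2⟩, fun h => ⟨⟨fun i => hP _ (h.2 i), h.1⟩, h.2⟩⟩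

end Composition

theorem card_cyclicGapsSatisfy_mul {n m : ℕ} [NeZero n] {P : ℕ → Prop}
    (hP : ∀ k, P k → 0 < k) (hm : 2 ≤ m) :
    Nat.card {I : Finset (Fin n) // I.card = m ∧ CyclicGapsSatisfy P I} * m =
      n * Nat.card {f : Fin m → ℕ // ∑ i, f i = n ∧ ∀ i, P (f i)} := by
  rw [card_mul_eq_card_mul_card_zero_mem (G := Fin n) (fun g _ => cyclicGapsSatisfy_vadd_iff g),
    Nat.card_eq_fintype_card, Fintype.card_fin, ← Composition.card_length_eq_card_tuples hP]
  congr 1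
  have hstarts (c : Composition n) :
      (c.length = m ∧ ∀ b ∈ c.blocks, P b) ↔
        (c.starts.card = m ∧ CyclicGapsSatisfy P c.starts) := by
    rw [c.card_starts]
    exact and_congr_right fun hc => (c.cyclicGapsSatisfy_starts_iff (hc ▸ hm)).symm
  refine (Nat.card_congr <| (Composition.startsEquiv.subtypeEquiv
    (q := fun J => J.1.card = m ∧ CyclicGapsSatisfy P J.1) hstarts).trans <|
    Equiv.subtypeSubtypeEquivSubtypeInter (fun J : Finset (Fin n) => 0 ∈ J)
      fun J => J.card = m ∧ CyclicGapsSatisfy P J).symm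

lemma card_odd_tuples (m e M : ℕ) :
    Nat.card {f : Fin m → ℕ // ∑ i, f i = 2 * M + m * (2 * e + 1) ∧
      ∀ i, Odd (f i) ∧ 2 * e + 1 ≤ f i} = (m + M - 1).choose M := by
  have hsum (g : Fin m → ℕ) :
      ∑ i, (2 * g i + (2 * e + 1)) = 2 * ∑ i, g i + m * (2 * e + 1) := by
    simp [sum_add_distrib, mul_sum]
  have hbij : Function.Bijective fun g : {g : Fin m → ℕ // ∑ i, g i = M} =>
      (⟨fun i => 2 * g.1 i + (2 * e + 1), by rw [hsum, g.2],
        fun i => ⟨⟨g.1 i + e, by ring⟩, Nat.le_add_left _ _⟩⟩ :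
        {f : Fin m → ℕ // ∑ i, f i = 2 * M + m * (2 * e + 1) ∧
          ∀ i, Odd (f i) ∧ 2 * e + 1 ≤ f i}) := by
    refine ⟨fun g g' h => Subtype.ext <| funext fun i => ?_, fun ⟨f, hf, hodd⟩ => ?_⟩
    · have := congrFun (congrArg Subtype.val h) i
      simp only at this
      omega
    · have hf' (i : Fin m) : 2 * (f i / 2 - e) + (2 * e + 1) = f i := by
        obtain ⟨⟨k, hk⟩, hle⟩ := hodd i
        omega
      refine ⟨⟨fun i => f i / 2 - e, ?_⟩, Subtype.ext <| funext hf'⟩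
      have h2 := hsum fun i => f i / 2 - e
      rw [sum_congr rfl fun i _ => hf' i, hf] at h2
      show ∑ i, (f i / 2 - e) = M
      omega
  rw [← Nat.card_eq_of_bijective _ hbij, ← Nat.card_congr (Sym.equivNatSumOfFintype (Fin m) M),
    Nat.card_eq_fintype_card, Sym.card_sym_eq_choose, Fintype.card_fin]

lemma card_odd_tuples_sum_two_mul (N d r : ℕ) (hr : 1 ≤ r) :
    Nat.card {f : Fin (2 * r) → ℕ // ∑ i, f i = 2 * N ∧ ∀ i, Odd (f i) ∧ 2 * d + 3 ≤ f i} =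
      (N - (2 * d + 1) * r - 1).choose (2 * r - 1) := by
  have hgap : (2 * d + 3) * r = (2 * d + 1) * r + 2 * r := by ring
  by_cases h : (2 * d + 3) * r ≤ N
  · obtain ⟨M, rfl⟩ : ∃ M, N = M + (2 * d + 3) * r := ⟨N - (2 * d + 3) * r, by omega⟩
    have := card_odd_tuples (2 * r) (d + 1) M
    rw [show 2 * (d + 1) + 1 = 2 * d + 3 by ring,
      show 2 * M + 2 * r * (2 * d + 3) = 2 * (M + (2 * d + 3) * r) by ring] at this
    rw [this, show M + (2 * d + 3) * r - (2 * d + 1) * r - 1 = 2 * r + M - 1 by omega]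
    exact Nat.choose_symm_of_eq_add (by omega)
  · have : IsEmpty {f : Fin (2 * r) → ℕ //
        ∑ i, f i = 2 * N ∧ ∀ i, Odd (f i) ∧ 2 * d + 3 ≤ f i} := by
      refine ⟨fun ⟨f, hf, hodd⟩ => h ?_⟩
      have := sum_le_sum fun i (_ : i ∈ univ) => (hodd i).2
      simp only [sum_const, card_univ, Fintype.card_fin, smul_eq_mul, hf] at this
      linarith
    rw [Nat.card_of_isEmpty, Nat.choose_eq_zero_of_lt (by omega)]

theorem stmt12_general (n d r : ℕ) (hn : 0 < n) (hne : Even n) (hr : 1 ≤ r) :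
    (Set.ncard {I : Finset (Fin n) | I.card = 2 * r ∧
        ∀ x ∈ I, ∀ y ∈ I, x ≠ y →
          (∀ z ∈ I, z ≠ x → rhoPlus n x y ≤ rhoPlus n x z) →
          Odd (rhoPlus n x y) ∧ 2 * d + 3 ≤ rhoPlus n x y} : ℝ) =
      (n : ℝ) / (2 * r) * (Nat.choose (n / 2 - (2 * d + 1) * r - 1) (2 * r - 1)) := by
  have : NeZero n := ⟨hn.ne'⟩
  obtain ⟨N, rfl⟩ := hne.two_dvd
  have key := card_cyclicGapsSatisfy_mul (n := 2 * N) (P := fun k => Odd k ∧ 2 * d + 3 ≤ k)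
    (fun k hk => by omega) (show 2 ≤ 2 * r by omega)
  rw [card_odd_tuples_sum_two_mul N d r hr] at key
  rw [← Nat.card_coe_set_eq, Nat.mul_div_cancel_left N two_pos, div_mul_eq_mul_div,
    eq_div_iff (by positivity)]
  exact_mod_cast key

/-- Fix `n` even positive, `d ≥ 1` and `r ≥ 1`. The number of subsets
`I` of `ℤ/nℤ` with `|I| = 2r` such that the clockwise distance from each element of `I`
to its successor in `I` is odd and at least `2d+3` equals
`(n/(2r))·C(n/2 − (2d+1)r − 1, 2r − 1)`. -/
theorem stmt12 (n d r : ℕ) (hn : 0 < n) (hne : Even n) (hd : 1 ≤ d) (hr : 1 ≤ r) :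
    (Set.ncard {I : Finset (Fin n) | I.card = 2 * r ∧
        ∀ x ∈ I, ∀ y ∈ I, x ≠ y →
          (∀ z ∈ I, z ≠ x → rhoPlus n x y ≤ rhoPlus n x z) →
          Odd (rhoPlus n x y) ∧ 2 * d + 3 ≤ rhoPlus n x y} : ℝ) =
      (n : ℝ) / (2 * r) * (Nat.choose (n / 2 - (2 * d + 1) * r - 1) (2 * r - 1)) :=
  stmt12_general n d r hn hne hr
end

section
/- Let G be a finite, bipartite, connected graph with a distinguished vertex v₀, and let f be a uniformly chosen graph homomorphism from G to ℤ with f(v₀)=0. For any two increasing functions φ, ψ: ℤ^{V(G)} → ℝ we have E[φ(|f|)·ψ(|f|)] ≥ E[φ(|f|)]·E[ψ(|f|)], where |f| is the pointwise absolute value of f. -/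
/-
Let `μ x` be the number of homomorphisms `f` with `|f| = x`. The claim is the FKG inequality for
`μ` on the distributive lattice `V → ℤ`, so it suffices to show
`μ x * μ y ≤ μ (x ⊓ y) * μ (x ⊔ y)`. Since all homomorphisms have the same parity at every vertex,
`x ⊓ y` and `x ⊔ y` are again homomorphisms, and a homomorphism with absolute value `c` is `c`
times a sign that is constant on each component of the support of `c`. A pair `(f, g)` with
`|f| = x`, `|g| = y` is sent to the signed versions of `x ⊓ y` (sign of `f` times sign of `g`) and
of `x ⊔ y` (sign of `f`, or of `g` where `f` vanishes), the signs being read off at a fixed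
representative of each component. This is injective: the representative fixes `f` or `g`, and
along an edge of the support of `x ⊔ y` one of `f`, `g` is nonzero at both ends, so its value
propagates, while the product of signs transfers it between `f` and `g`.
-/

/-- The set of graph homomorphisms from a graph `G` to `ℤ` sending `v₀` to `0`. -/
def ZHom {V : Type*} (G : SimpleGraph V) (v₀ : V) : Set (V → ℤ) :=
  {f | f v₀ = 0 ∧ ∀ x y : V, G.Adj x y → |f x - f y| = 1}

open SimpleGraph

lemma SimpleGraph.Reachable.of_forall_adj {V : Type*} {G : SimpleGraph V} {P : V → Prop}
    {u v : V} (h : G.Reachable u v) (hP : ∀ x y, G.Adj x y → P x → P y) (hu : P u) : P v := by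
  rw [reachable_iff_reflTransGen] at h
  induction h with
  | refl => exact hu
  | tail _ hxy ih => exact hP _ _ hxy ih

namespace Int

lemma sign_eq_sign_of_abs_sub_eq_one {a b : ℤ} (h : |a - b| = 1) (ha : a ≠ 0) (hb : b ≠ 0) :
    a.sign = b.sign := by
  rw [abs_eq_natAbs] at h
  rcases lt_or_gt_of_ne ha with ha | ha
  · rw [sign_eq_neg_one_of_neg ha, sign_eq_neg_one_of_neg (by omega)]
  · rw [sign_eq_one_of_pos ha, sign_eq_one_of_pos (by omega)]

lemma eq_of_sign_eq_of_abs_eq {a b : ℤ} (hs : a.sign = b.sign) (ha : |a| = |b|) : a = b := by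
  rw [← sign_mul_abs a, hs, ha, sign_mul_abs]

lemma eq_of_abs_sub_eq_one {p q q' : ℤ} (hp : p ≠ 0) (hq : |p - q| = 1) (hq' : |p - q'| = 1)
    (h : |q| = |q'|) : q = q' := by
  simp only [abs_eq_natAbs] at *
  omega

lemma eq_and_eq_of_sign_mul_sign_eq {a b a' b' : ℤ} (ha : |a'| = |a|) (hb : |b'| = |b|)
    (h : a ≠ 0 → b ≠ 0 → a.sign * b.sign = a'.sign * b'.sign)
    (hab : a ≠ 0 ∧ a = a' ∨ b ≠ 0 ∧ b = b') : a = a' ∧ b = b' := by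
  have eq_of_eq_zero {c c' : ℤ} (hc : |c'| = |c|) (h0 : c = 0) : c = c' := by
    rw [h0, eq_comm, ← abs_eq_zero, hc, h0, abs_zero]
  rcases hab with ⟨ha0, rfl⟩ | ⟨hb0, rfl⟩
  · refine ⟨rfl, ?_⟩
    by_cases hb0 : b = 0
    · exact eq_of_eq_zero hb hb0
    · exact eq_of_sign_eq_of_abs_eq (mul_left_cancel₀ (mt sign_eq_zero_iff_zero.1 ha0)
        (h ha0 hb0)) hb.symm
  · refine ⟨?_, rfl⟩
    by_cases ha0 : a = 0
    · exact eq_of_eq_zero ha ha0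
    · exact eq_of_sign_eq_of_abs_eq (mul_right_cancel₀ (mt sign_eq_zero_iff_zero.1 hb0)
        (h ha0 hb0)) ha.symm

end Int

section Lift
variable {V : Type*}

def supportGraph (G : SimpleGraph V) (c : V → ℤ) : SimpleGraph V where
  Adj u v := G.Adj u v ∧ c u ≠ 0 ∧ c v ≠ 0
  symm := ⟨fun _ _ h => ⟨h.1.symm, h.2.2, h.2.1⟩⟩
  loopless := ⟨fun _ h => h.1.ne rfl⟩

@[simp]
lemma supportGraph_adj {G : SimpleGraph V} {c : V → ℤ} {u v : V} :
    (supportGraph G c).Adj u v ↔ G.Adj u v ∧ c u ≠ 0 ∧ c v ≠ 0 :=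
  Iff.rfl

noncomputable def componentRep (H : SimpleGraph V) (v : V) : V :=
  (H.connectedComponentMk v).out

lemma reachable_componentRep (H : SimpleGraph V) (v : V) : H.Reachable (componentRep H v) v :=
  ConnectedComponent.exact (Quot.out_eq _)

lemma componentRep_eq_of_adj {H : SimpleGraph V} {u v : V} (h : H.Adj u v) :
    componentRep H u = componentRep H v := by
  rw [componentRep, componentRep, ConnectedComponent.connectedComponentMk_eq_of_adj h]

lemma componentRep_componentRep (H : SimpleGraph V) (v : V) :
    componentRep H (componentRep H v) = componentRep H v :=
  congrArg Quot.out (Quot.out_eq (H.connectedComponentMk v))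

variable {G : SimpleGraph V} {c : V → ℤ}

lemma apply_componentRep_ne_zero {v : V} (hv : c v ≠ 0) :
    c (componentRep (supportGraph G c) v) ≠ 0 :=
  (reachable_componentRep _ v).symm.of_forall_adj (P := fun x => c x ≠ 0)
    (fun _ _ h _ => (supportGraph_adj.1 h).2.2) hv

lemma sign_componentRep {f : V → ℤ} (hf : ∀ x y, G.Adj x y → |f x - f y| = 1)
    (hc : ∀ v, c v ≠ 0 → f v ≠ 0) (v : V) :
    (f (componentRep (supportGraph G c) v)).sign = (f v).sign :=
  (reachable_componentRep _ v).of_forall_adj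
    (P := fun x => (f (componentRep (supportGraph G c) v)).sign = (f x).sign)
    (fun x y h hx => hx.trans (Int.sign_eq_sign_of_abs_sub_eq_one (hf x y (supportGraph_adj.1 h).1)
      (hc x (supportGraph_adj.1 h).2.1) (hc y (supportGraph_adj.1 h).2.2))) rfl

noncomputable def signLift (G : SimpleGraph V) (c s : V → ℤ) (v : V) : ℤ :=
  s (componentRep (supportGraph G c) v) * c v

lemma abs_signLift {s : V → ℤ} (hs : ∀ v, c v ≠ 0 → |s v| = 1) (v : V) :
    |signLift G c s v| = |c v| := by
  rw [signLift, abs_mul]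
  by_cases hv : c v = 0
  · simp [hv]
  · rw [hs _ (apply_componentRep_ne_zero hv), one_mul]

lemma signLift_mem_ZHom {v₀ : V} {s : V → ℤ} (hc : c ∈ ZHom G v₀)
    (hs : ∀ v, c v ≠ 0 → |s v| = 1) : signLift G c s ∈ ZHom G v₀ := by
  refine ⟨by simp [signLift, hc.1], fun x y hxy => ?_⟩
  have hcxy := hc.2 x y hxy
  have hzero : ∀ v, c v = 0 → signLift G c s v = 0 := fun v hv => by simp [signLift, hv]
  by_cases hx : c x = 0
  · rw [hzero x hx, zero_sub, abs_neg, abs_signLift hs]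
    simpa [hx] using hcxy
  by_cases hy : c y = 0
  · rw [hzero y hy, sub_zero, abs_signLift hs]
    simpa [hy] using hcxy
  rw [signLift, signLift, componentRep_eq_of_adj (supportGraph_adj.2 ⟨hxy, hx, hy⟩),
    ← mul_sub, abs_mul, hcxy, hs _ (apply_componentRep_ne_zero hy), mul_one]

end Lift

namespace ZHom
variable {V : Type*} {G : SimpleGraph V} {v₀ : V} {f g : V → ℤ}

lemma abs_mem (hf : f ∈ ZHom G v₀) : |f| ∈ ZHom G v₀ := by
  refine ⟨by simp [hf.1], fun x y hxy => ?_⟩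
  have := hf.2 x y hxy
  simp only [Pi.abs_apply, Int.abs_eq_natAbs] at *
  omega

lemma two_dvd_sub (hG : G.Preconnected) (hf : f ∈ ZHom G v₀) (hg : g ∈ ZHom G v₀) (v : V) :
    2 ∣ f v - g v :=
  (hG v₀ v).of_forall_adj (P := fun v => 2 ∣ f v - g v) (fun x y hxy _ => by
    have := hf.2 x y hxy
    have := hg.2 x y hxy
    simp only [Int.abs_eq_natAbs] at *
    omega) (by simp [hf.1, hg.1])

lemma inf_mem (hG : G.Preconnected) (hf : f ∈ ZHom G v₀) (hg : g ∈ ZHom G v₀) :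
    f ⊓ g ∈ ZHom G v₀ := by
  refine ⟨by simp [hf.1, hg.1], fun x y hxy => ?_⟩
  have := hf.2 x y hxy
  have := hg.2 x y hxy
  have := two_dvd_sub hG hf hg x
  simp only [Pi.inf_apply, Int.abs_eq_natAbs] at *
  omega

lemma sup_mem (hG : G.Preconnected) (hf : f ∈ ZHom G v₀) (hg : g ∈ ZHom G v₀) :
    f ⊔ g ∈ ZHom G v₀ := by
  refine ⟨by simp [hf.1, hg.1], fun x y hxy => ?_⟩
  have := hf.2 x y hxy
  have := hg.2 x y hxy
  have := two_dvd_sub hG hf hg x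
  simp only [Pi.sup_apply, Int.abs_eq_natAbs] at *
  omega

lemma abs_apply_le_length (hf : f ∈ ZHom G v₀) {u v : V} (w : G.Walk u v) :
    |f v| ≤ |f u| + w.length := by
  induction w with
  | nil => simp
  | cons h _ ih =>
    have := hf.2 _ _ h
    rw [Walk.length_cons]
    simp only [Int.abs_eq_natAbs] at *
    omega

lemma finite [Finite V] (hG : G.Preconnected) : (ZHom G v₀).Finite := by
  classical
  have := Fintype.ofFinite V
  refine (Set.finite_Icc (fun v => -(G.dist v₀ v : ℤ)) (fun v => (G.dist v₀ v : ℤ))).subset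
    fun f hf => ?_
  have hbound (v : V) : |f v| ≤ G.dist v₀ v := by
    obtain ⟨w, hw⟩ := (hG v₀ v).exists_walk_length_eq_dist
    simpa [hf.1, hw] using abs_apply_le_length hf w
  exact ⟨fun v => neg_le_of_abs_le (hbound v), fun v => le_of_abs_le (hbound v)⟩

end ZHom

section Fiber
variable {V : Type*} {G : SimpleGraph V} {v₀ : V}

def absFiber (G : SimpleGraph V) (v₀ : V) (x : V → ℤ) : Set (V → ℤ) :=
  {f ∈ ZHom G v₀ | |f| = x}

noncomputable def infSupLift (G : SimpleGraph V) (x y : V → ℤ) (p : (V → ℤ) × (V → ℤ)) :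
    (V → ℤ) × (V → ℤ) :=
  (signLift G (x ⊓ y) fun r => (p.1 r).sign * (p.2 r).sign,
    signLift G (x ⊔ y) fun r => if p.1 r = 0 then (p.2 r).sign else (p.1 r).sign)

lemma infSupLift_mem (hG : G.Preconnected) {x y f g : V → ℤ} (hf : f ∈ absFiber G v₀ x)
    (hg : g ∈ absFiber G v₀ y) :
    infSupLift G x y (f, g) ∈ absFiber G v₀ (x ⊓ y) ×ˢ absFiber G v₀ (x ⊔ y) := by
  obtain ⟨hf, rfl⟩ := hf
  obtain ⟨hg, rfl⟩ := hg
  have hs₁ : ∀ v, (|f| ⊓ |g|) v ≠ 0 → |(f v).sign * (g v).sign| = 1 := fun v hv => by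
    have hfv : f v ≠ 0 := by simp only [Pi.inf_apply, Pi.abs_apply] at hv; grind
    have hgv : g v ≠ 0 := by simp only [Pi.inf_apply, Pi.abs_apply] at hv; grind
    rw [abs_mul, Int.abs_sign_of_ne_zero hfv, Int.abs_sign_of_ne_zero hgv, mul_one]
  have hs₂ : ∀ v, (|f| ⊔ |g|) v ≠ 0 →
      |if f v = 0 then (g v).sign else (f v).sign| = 1 := fun v hv => by
    split_ifs with hfv
    · exact Int.abs_sign_of_ne_zero (by simp_all)
    · exact Int.abs_sign_of_ne_zero hfv
  refine ⟨⟨signLift_mem_ZHom (ZHom.inf_mem hG (ZHom.abs_mem hf) (ZHom.abs_mem hg)) hs₁, ?_⟩,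
    ⟨signLift_mem_ZHom (ZHom.sup_mem hG (ZHom.abs_mem hf) (ZHom.abs_mem hg)) hs₂, ?_⟩⟩
  · ext v
    exact (abs_signLift hs₁ v).trans (abs_of_nonneg (by simp))
  · ext v
    exact (abs_signLift hs₂ v).trans (abs_of_nonneg (by simp))

lemma sign_mul_sign_eq_of_infSupLift_fst_eq {f g f' g' : V → ℤ} (hf : f ∈ ZHom G v₀)
    (hg : g ∈ ZHom G v₀) (hf' : f' ∈ ZHom G v₀) (hg' : g' ∈ ZHom G v₀) (hff' : |f'| = |f|)
    (hgg' : |g'| = |g|)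
    (h : (infSupLift G |f| |g| (f, g)).1 = (infSupLift G |f| |g| (f', g')).1) {v : V}
    (hfv : f v ≠ 0) (hgv : g v ≠ 0) :
    (f v).sign * (g v).sign = (f' v).sign * (g' v).sign := by
  have hne {k : V → ℤ} (hk : |k| = |f| ∨ |k| = |g|) (u : V) (hu : (|f| ⊓ |g|) u ≠ 0) :
      k u ≠ 0 := by
    rcases hk with hk | hk <;>
    · have := congrFun hk u
      simp only [Pi.inf_apply, Pi.abs_apply] at this hu
      grind
  have hv : (|f| ⊓ |g|) v ≠ 0 := by
    simpa only [Pi.inf_apply, Pi.abs_apply] using (lt_min (abs_pos.2 hfv) (abs_pos.2 hgv)).ne'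
  have := mul_right_cancel₀ hv (congrFun h v)
  dsimp only at this
  rwa [sign_componentRep hf.2 (hne (.inl rfl)), sign_componentRep hg.2 (hne (.inr rfl)),
    sign_componentRep hf'.2 (hne (.inl hff')), sign_componentRep hg'.2 (hne (.inr hgg'))] at this

lemma eq_or_eq_of_infSupLift_snd_eq {f g f' g' : V → ℤ} (hff' : |f'| = |f|) (hgg' : |g'| = |g|)
    (h : (infSupLift G |f| |g| (f, g)).2 = (infSupLift G |f| |g| (f', g')).2) {r : V}
    (hrep : componentRep (supportGraph G (|f| ⊔ |g|)) r = r) (hr₀ : (|f| ⊔ |g|) r ≠ 0) :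
    f r ≠ 0 ∧ f r = f' r ∨ g r ≠ 0 ∧ g r = g' r := by
  have hr := mul_right_cancel₀ hr₀ (congrFun h r)
  simp only [hrep] at hr
  have habsf : |f' r| = |f r| := by simpa using congrFun hff' r
  have habsg : |g' r| = |g r| := by simpa using congrFun hgg' r
  by_cases hfr : f r = 0
  · have hf'r : f' r = 0 := by rwa [← abs_eq_zero, habsf, abs_eq_zero]
    rw [if_pos hfr, if_pos hf'r] at hr
    exact .inr ⟨by simp_all, Int.eq_of_sign_eq_of_abs_eq hr habsg.symm⟩
  · have hf'r : f' r ≠ 0 := by rwa [← abs_ne_zero, habsf, abs_ne_zero]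
    rw [if_neg hfr, if_neg hf'r] at hr
    exact .inl ⟨hfr, Int.eq_of_sign_eq_of_abs_eq hr habsf.symm⟩

lemma eq_of_infSupLift_eq (hG : G.Preconnected) {f g f' g' : V → ℤ} (hf : f ∈ ZHom G v₀)
    (hg : g ∈ ZHom G v₀) (hf' : f' ∈ ZHom G v₀) (hg' : g' ∈ ZHom G v₀) (hff' : |f'| = |f|)
    (hgg' : |g'| = |g|) (h : infSupLift G |f| |g| (f, g) = infSupLift G |f| |g| (f', g')) :
    f = f' ∧ g = g' := by
  have habsf (v : V) : |f' v| = |f v| := by simpa using congrFun hff' v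
  have habsg (v : V) : |g' v| = |g v| := by simpa using congrFun hgg' v
  have agree (v : V) := Int.eq_and_eq_of_sign_mul_sign_eq (habsf v) (habsg v)
    (sign_mul_sign_eq_of_infSupLift_fst_eq hf hg hf' hg' hff' hgg' (congrArg Prod.fst h))
  have agree_of_adj {a b : V} (hab : (supportGraph G (|f| ⊔ |g|)).Adj a b)
      (ha : f a = f' a ∧ g a = g' a) : f b = f' b ∧ g b = g' b := by
    obtain ⟨hab, ha0, hb0⟩ := supportGraph_adj.1 hab
    have hpar := ZHom.two_dvd_sub hG (ZHom.abs_mem hf) (ZHom.abs_mem hg) a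
    have hfab := hf.2 a b hab
    have hgab := hg.2 a b hab
    have hf'ab := hf'.2 a b hab
    have hg'ab := hg'.2 a b hab
    rw [← ha.1] at hf'ab
    rw [← ha.2] at hg'ab
    have : (f a ≠ 0 ∧ f b ≠ 0) ∨ (g a ≠ 0 ∧ g b ≠ 0) := by
      simp only [Pi.sup_apply, Pi.abs_apply, Int.abs_eq_natAbs] at *
      omega
    refine agree b (this.imp (fun ⟨hfa, hfb⟩ => ⟨hfb, ?_⟩) (fun ⟨hga, hgb⟩ => ⟨hgb, ?_⟩))
    · exact Int.eq_of_abs_sub_eq_one hfa hfab hf'ab (habsf b).symm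
    · exact Int.eq_of_abs_sub_eq_one hga hgab hg'ab (habsg b).symm
  have agree_all (v : V) : f v = f' v ∧ g v = g' v := by
    by_cases hv : (|f| ⊔ |g|) v = 0
    · obtain ⟨hfv, hgv⟩ : f v = 0 ∧ g v = 0 := by
        simp only [Pi.sup_apply, Pi.abs_apply, Int.abs_eq_natAbs] at hv
        omega
      exact ⟨hfv.trans (abs_eq_zero.1 ((habsf v).trans (abs_eq_zero.2 hfv))).symm,
        hgv.trans (abs_eq_zero.1 ((habsg v).trans (abs_eq_zero.2 hgv))).symm⟩
    · exact (reachable_componentRep _ v).of_forall_adj (P := fun v => f v = f' v ∧ g v = g' v)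
        (fun _ _ hab ha => agree_of_adj hab ha)
        (agree _ (eq_or_eq_of_infSupLift_snd_eq hff' hgg' (congrArg Prod.snd h)
          (componentRep_componentRep _ v) (apply_componentRep_ne_zero hv)))
  exact ⟨funext fun v => (agree_all v).1, funext fun v => (agree_all v).2⟩

lemma infSupLift_injOn (hG : G.Preconnected) (x y : V → ℤ) :
    Set.InjOn (infSupLift G x y) (absFiber G v₀ x ×ˢ absFiber G v₀ y) := by
  rintro ⟨f, g⟩ ⟨⟨hf, rfl⟩, ⟨hg, rfl⟩⟩ ⟨f', g'⟩ ⟨⟨hf', hff'⟩, ⟨hg', hgg'⟩⟩ h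
  obtain ⟨rfl, rfl⟩ := eq_of_infSupLift_eq hG hf hg hf' hg' hff' hgg' h
  rfl

end Fiber

lemma absFiber_ncard_mul_le {V : Type*} [Finite V] {G : SimpleGraph V} {v₀ : V}
    (hG : G.Preconnected) (x y : V → ℤ) :
    (absFiber G v₀ x).ncard * (absFiber G v₀ y).ncard ≤
      (absFiber G v₀ (x ⊓ y)).ncard * (absFiber G v₀ (x ⊔ y)).ncard := by
  have hfin (z : V → ℤ) : (absFiber G v₀ z).Finite := (ZHom.finite hG).subset (Set.sep_subset _ _)
  rw [← Set.ncard_prod, ← Set.ncard_prod]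
  exact Set.ncard_le_ncard_of_injOn _ (fun p hp => infSupLift_mem hG hp.1 hp.2)
    (infSupLift_injOn hG x y) ((hfin _).prod (hfin _))

section FKG
variable {α : Type*} [DistribLattice α] [DecidableEq α] {s : Finset α} {μ f g : α → ℝ}

lemma fkg_of_support_subset_of_nonneg (hμ₀ : 0 ≤ μ) (hμs : ∀ a ∉ s, μ a = 0)
    (hf₀ : ∀ a ∈ s, 0 ≤ f a) (hg₀ : ∀ a ∈ s, 0 ≤ g a) (hf : Monotone f) (hg : Monotone g)
    (hμ : ∀ a b, μ a * μ b ≤ μ (a ⊓ b) * μ (a ⊔ b)) :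
    (∑ a ∈ s, μ a * f a) * ∑ a ∈ s, μ a * g a ≤ (∑ a ∈ s, μ a) * ∑ a ∈ s, μ a * (f a * g a) := by
  have weighted_nonneg {t : α → ℝ} (ht : ∀ a ∈ s, 0 ≤ t a) (a : α) : 0 ≤ μ a * t a := by
    by_cases ha : a ∈ s
    · exact mul_nonneg (hμ₀ a) (ht a ha)
    · rw [hμs a ha, zero_mul]
  have hfg₀ (a : α) (ha : a ∈ s) : 0 ≤ f a * g a := mul_nonneg (hf₀ a ha) (hg₀ a ha)
  have key := four_functions_theorem (fun a => μ a * f a) (fun a => μ a * g a) μ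
    (fun a => μ a * (f a * g a)) (weighted_nonneg hf₀) (weighted_nonneg hg₀) hμ₀
    (weighted_nonneg hfg₀) (fun a b => ?_) s s
  · rwa [← Finset.sum_subset Finset.subset_infs_self fun a _ ha => hμs a ha,
      ← Finset.sum_subset Finset.subset_sups_self fun a _ ha => by rw [hμs a ha, zero_mul]] at key
  rw [show μ a * f a * (μ b * g b) = μ a * μ b * (f a * g b) by ring]
  by_cases hab : a ∈ s ∧ b ∈ s
  · calc μ a * μ b * (f a * g b)
        ≤ μ (a ⊓ b) * μ (a ⊔ b) * (f (a ⊔ b) * g (a ⊔ b)) :=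
          mul_le_mul (hμ a b) (mul_le_mul (hf le_sup_left) (hg le_sup_right) (hg₀ b hab.2)
            ((hf₀ a hab.1).trans (hf le_sup_left))) (mul_nonneg (hf₀ a hab.1) (hg₀ b hab.2))
            (mul_nonneg (hμ₀ _) (hμ₀ _))
      _ = μ (a ⊓ b) * (μ (a ⊔ b) * (f (a ⊔ b) * g (a ⊔ b))) := by ring
  · have hzero : μ a * μ b = 0 := by
      rcases not_and_or.1 hab with ha | hb
      · rw [hμs a ha, zero_mul]
      · rw [hμs b hb, mul_zero]
    rw [hzero, zero_mul]
    exact mul_nonneg (hμ₀ _) (weighted_nonneg hfg₀ _)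

/-- Mathlib's `fkg`, for a finitely supported measure on any distributive lattice and monotone
functions of any sign. -/
lemma fkg_of_support_subset (hμ₀ : 0 ≤ μ) (hμs : ∀ a ∉ s, μ a = 0) (hf : Monotone f)
    (hg : Monotone g) (hμ : ∀ a b, μ a * μ b ≤ μ (a ⊓ b) * μ (a ⊔ b)) :
    (∑ a ∈ s, μ a * f a) * ∑ a ∈ s, μ a * g a ≤ (∑ a ∈ s, μ a) * ∑ a ∈ s, μ a * (f a * g a) := by
  -- both sides change by the same amount when constants are added to `f` and `g`
  set C := ∑ a ∈ s, |f a|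
  set D := ∑ a ∈ s, |g a|
  have key := fkg_of_support_subset_of_nonneg (f := fun a => f a + C) (g := fun a => g a + D)
    hμ₀ hμs (fun a ha => ?_) (fun a ha => ?_) (fun a b h => by simpa using hf h)
    (fun a b h => by simpa using hg h) hμ
  · have e₁ : ∑ a ∈ s, μ a * (f a + C) = ∑ a ∈ s, μ a * f a + C * ∑ a ∈ s, μ a := by
      rw [Finset.mul_sum, ← Finset.sum_add_distrib]
      exact Finset.sum_congr rfl fun _ _ => by ring
    have e₂ : ∑ a ∈ s, μ a * (g a + D) = ∑ a ∈ s, μ a * g a + D * ∑ a ∈ s, μ a := by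
      rw [Finset.mul_sum, ← Finset.sum_add_distrib]
      exact Finset.sum_congr rfl fun _ _ => by ring
    have e₃ : ∑ a ∈ s, μ a * ((f a + C) * (g a + D)) = ∑ a ∈ s, μ a * (f a * g a) +
        D * ∑ a ∈ s, μ a * f a + C * ∑ a ∈ s, μ a * g a + C * D * ∑ a ∈ s, μ a := by
      simp only [Finset.mul_sum, ← Finset.sum_add_distrib]
      exact Finset.sum_congr rfl fun _ _ => by ring
    rw [e₁, e₂, e₃] at key
    linarith
  · linarith [Finset.single_le_sum (f := fun a => |f a|) (fun _ _ => abs_nonneg _) ha,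
      neg_abs_le (f a)]
  · linarith [Finset.single_le_sum (f := fun a => |g a|) (fun _ _ => abs_nonneg _) ha,
      neg_abs_le (g a)]

end FKG

lemma Set.Finite.tsum_comp_eq_sum_ncard_mul {α β : Type*} [DecidableEq β] {Z : Set α}
    (hZ : Z.Finite) (p : α → β) (F : β → ℝ) :
    ∑' z : Z, F (p z) = ∑ b ∈ hZ.toFinset.image p, ({a ∈ Z | p a = b}.ncard : ℝ) * F b := by
  have := hZ.fintype
  rw [tsum_fintype, ← Finset.sum_subtype hZ.toFinset (fun _ => hZ.mem_toFinset) (fun a => F (p a)),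
    Finset.sum_comp]
  refine Finset.sum_congr rfl fun b _ => ?_
  rw [nsmul_eq_mul, ← Set.ncard_coe_finset, Finset.coe_filter]
  simp only [Set.Finite.mem_toFinset]

theorem stmt16_general {V : Type*} [Fintype V] (G : SimpleGraph V)
    (hconn : G.Connected) (v₀ : V)
    (φ ψ : (V → ℤ) → ℝ) (hφ : Monotone φ) (hψ : Monotone ψ) :
    (Set.ncard (ZHom G v₀) : ℝ) *
        ∑' f : ZHom G v₀, φ (fun v => |f.val v|) * ψ (fun v => |f.val v|) ≥
      (∑' f : ZHom G v₀, φ (fun v => |f.val v|)) *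
        (∑' f : ZHom G v₀, ψ (fun v => |f.val v|)) := by
  classical
  have hZ := ZHom.finite (v₀ := v₀) hconn.preconnected
  set s := hZ.toFinset.image (|·|)
  set μ : (V → ℤ) → ℝ := fun x => ((absFiber G v₀ x).ncard : ℝ)
  have regroup (F : (V → ℤ) → ℝ) :
      ∑' f : ZHom G v₀, F (fun v => |f.val v|) = ∑ x ∈ s, μ x * F x :=
    hZ.tsum_comp_eq_sum_ncard_mul (|·|) F
  have hcard : (Set.ncard (ZHom G v₀) : ℝ) = ∑ x ∈ s, μ x := by
    simpa [Nat.card_coe_set_eq] using regroup 1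
  rw [hcard, regroup φ, regroup ψ, regroup (fun x => φ x * ψ x), ge_iff_le]
  refine fkg_of_support_subset (fun x => Nat.cast_nonneg _) (fun x hx => ?_) hφ hψ fun x y => ?_
  · have : absFiber G v₀ x = ∅ := Set.eq_empty_of_forall_notMem fun f ⟨hf, hfx⟩ =>
      hx (Finset.mem_image.2 ⟨f, hZ.mem_toFinset.2 hf, hfx⟩)
    simp [μ, this]
  · simp only [μ]
    exact_mod_cast absFiber_ncard_mul_le hconn.preconnected x y

/-- (FKG inequality for absolute values.) Let `G` be a finite,
bipartite and connected graph, `v₀ ∈ V(G)` and `f` a uniformly chosen homomorphism in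
`Hom(G,v₀)`. For any two increasing functions `φ, ψ : ℤ^V → ℝ`,
`E[φ(|f|)·ψ(|f|)] ≥ E[φ(|f|)]·E[ψ(|f|)]`, stated equivalently (multiplying through by
`|Hom(G,v₀)|²`) as below. -/
theorem stmt16 {V : Type*} [Fintype V] (G : SimpleGraph V)
    (hconn : G.Connected) (hbip : G.Colorable 2) (v₀ : V)
    (φ ψ : (V → ℤ) → ℝ) (hφ : Monotone φ) (hψ : Monotone ψ) :
    (Set.ncard (ZHom G v₀) : ℝ) *
        ∑' f : ZHom G v₀, φ (fun v => |f.val v|) * ψ (fun v => |f.val v|) ≥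
      (∑' f : ZHom G v₀, φ (fun v => |f.val v|)) *
        (∑' f : ZHom G v₀, ψ (fun v => |f.val v|)) :=
  stmt16_general G hconn v₀ φ ψ hφ hψ
end
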